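/- arXiv:2303.09303 — 17 statements merged into one kernel-verified Lean document; each statement's English description precedes it below -/
import Mathlib

section
/- Let a, b, c be pairwise relatively prime integers with 2 ≤ a < b < c, and let S = ⟨ab, ac, bc⟩ be the numerical semigroup generated by ab, ac, bc. Then the Frobenius number of S (the largest integer not in S) is 2abc − (ab + ac + bc). -/
/-!
Since `gcd(a, d) = 1`, every `n` can be written `n = a m + w d` with `w < a`, and `m ≥ 0` as soon
as `a d < n + a + d`. With `d = bc` this reduces membership of `n` in `⟨ab, ac, bc⟩` to membership
of `m` in `⟨b, c⟩`, and with `d = c` the same division settles `⟨b, c⟩` (Sylvester's bound), so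
every `n > 2abc - ab - ac - bc` is representable. Conversely, a representation
`2abc = (u+1)ab + (v+1)ac + (w+1)bc` forces `a ∣ w+1`, `b ∣ v+1`, `c ∣ u+1`, making the right-hand
side at least `3abc`.
-/

lemma exists_eq_mul_add_mul_of_coprime {a d n : ℕ} (had : Nat.Coprime a d) (ha : 0 < a)
    (hn : a * d < n + a + d) : ∃ m w, w < a ∧ n = a * m + w * d := by
  have : NeZero a := ⟨ha.ne'⟩
  set w := ((n : ZMod a) * (ZMod.unitOfCoprime d had.symm)⁻¹).val
  have hwa : w < a := ZMod.val_lt _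
  have hmod : w * d ≡ n [MOD a] := by
    rw [← ZMod.natCast_eq_natCast_iff]
    simp only [w, Nat.cast_mul, ZMod.natCast_val, ZMod.cast_id', id, mul_assoc]
    rw [← ZMod.coe_unitOfCoprime d had.symm, Units.inv_mul, mul_one]
  have hwd : w * d < n + a := by nlinarith
  have hle : w * d ≤ n := by
    by_contra! h
    have := Nat.le_of_dvd (Nat.sub_pos_of_lt h) ((Nat.modEq_iff_dvd' h.le).mp hmod.symm)
    omega
  obtain ⟨m, hm⟩ := (Nat.modEq_iff_dvd' hle).mp hmod
  exact ⟨m, w, hwa, by omega⟩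

lemma le_of_mul_add_mul_eq_mul {a e x y z : ℕ} (hae : Nat.Coprime a e) (hx : 0 < x)
    (h : a * y + x * e = a * z) : a ≤ x := by
  have hdvd : a ∣ x * e := (Nat.dvd_add_right (dvd_mul_right a y)).mp (h ▸ dvd_mul_right a z)
  exact Nat.le_of_dvd hx (hae.dvd_of_dvd_mul_right hdvd)

lemma exists_eq_mul_add_mul_add_mul_of_lt {a b c n : ℕ} (ha : 0 < a) (hb : 0 < b) (hc : 0 < c)
    (cab : Nat.Coprime a b) (cac : Nat.Coprime a c) (cbc : Nat.Coprime b c)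
    (hn : 2 * a * b * c < n + (a * b + a * c + b * c)) :
    ∃ u v w, n = u * (a * b) + v * (a * c) + w * (b * c) := by
  have hglue : a * (b * c) < n + a + b * c := by
    nlinarith [Nat.mul_le_mul_left a (show b + c ≤ b * c + 1 by nlinarith)]
  obtain ⟨m, w, hwa, rfl⟩ := exists_eq_mul_add_mul_of_coprime (cab.mul_right cac) ha hglue
  have hm : b * c < m + b + c := by
    refine Nat.lt_of_mul_lt_mul_left (a := a) ?_
    nlinarith [Nat.mul_le_mul_right (b * c) hwa]
  obtain ⟨u, v, -, rfl⟩ := exists_eq_mul_add_mul_of_coprime cbc hb hm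
  exact ⟨u, v, w, by ring⟩

lemma not_exists_eq_mul_add_mul_add_mul_of_add_eq {a b c n : ℕ} (ha : 0 < a) (hb : 0 < b)
    (hc : 0 < c) (cab : Nat.Coprime a b) (cac : Nat.Coprime a c) (cbc : Nat.Coprime b c)
    (hn : n + (a * b + a * c + b * c) = 2 * a * b * c) :
    ¬ ∃ u v w, n = u * (a * b) + v * (a * c) + w * (b * c) := by
  rintro ⟨u, v, w, rfl⟩
  have hw : a ≤ w + 1 := le_of_mul_add_mul_eq_mul (cab.mul_right cac) w.succ_pos
    (y := (u + 1) * b + (v + 1) * c) (z := 2 * b * c) (by linarith)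
  have hv : b ≤ v + 1 := le_of_mul_add_mul_eq_mul (cab.symm.mul_right cbc) v.succ_pos
    (y := (u + 1) * a + (w + 1) * c) (z := 2 * a * c) (by linarith)
  have hu : c ≤ u + 1 := le_of_mul_add_mul_eq_mul (cac.symm.mul_right cbc.symm) u.succ_pos
    (y := (v + 1) * a + (w + 1) * b) (z := 2 * a * b) (by linarith)
  nlinarith [Nat.mul_le_mul_right (a * b) hu, Nat.mul_le_mul_right (a * c) hv,
    Nat.mul_le_mul_right (b * c) hw, Nat.mul_pos (Nat.mul_pos ha hb) hc]

theorem frobenius_supersymmetric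
    (a b c : ℕ) (ha : 2 ≤ a) (hab : a < b) (hbc : b < c)
    (cab : Nat.Coprime a b) (cac : Nat.Coprime a c) (cbc : Nat.Coprime b c) :
    IsGreatest {n : ℕ | ¬ ∃ u v w : ℕ, n = u * (a * b) + v * (a * c) + w * (b * c)}
      (2 * a * b * c - (a * b + a * c + b * c)) := by
  have hsum : a * b + a * c + b * c ≤ 2 * a * b * c := by
    nlinarith [Nat.mul_le_mul_right c (show a + b ≤ a * b by nlinarith)]
  refine ⟨not_exists_eq_mul_add_mul_add_mul_of_add_eq (by omega) (by omega) (by omega)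
    cab cac cbc (Nat.sub_add_cancel hsum), fun n hn => ?_⟩
  by_contra! hlt
  exact hn (exists_eq_mul_add_mul_add_mul_of_lt (by omega) (by omega) (by omega) cab cac cbc
    (by omega))
end

section
/- Let a, b, c be pairwise relatively prime integers with 2 ≤ a < b < c, and let S = ⟨ab, ac, bc⟩. Then S is symmetric: for every integer x, exactly one of x and F(S) − x belongs to S, where F(S) = 2abc − (ab+ac+bc) is the Frobenius number. -/
private lemma exists_res (p q x : ℤ) (hp : 0 < p) (h : IsCoprime q p) :
    ∃ w, 0 ≤ w ∧ w < p ∧ p ∣ x - w * q := by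
  obtain ⟨m, n, hmn⟩ := h
  refine ⟨(x * m) % p, Int.emod_nonneg _ hp.ne', Int.emod_lt_of_pos _ hp,
    ⟨x * n + (x * m / p) * q, ?_⟩⟩
  have h2 : x * m % p + p * (x * m / p) = x * m := Int.emod_add_mul_ediv _ _
  linear_combination (-q) * h2 - x * hmn

private lemma rep_exists (a b c : ℤ) (ha : 0 < a) (hb : 0 < b) (hc : 0 < c)
    (cab : IsCoprime a b) (cac : IsCoprime a c) (cbc : IsCoprime b c) (x : ℤ) :
    ∃ u v w t : ℤ, 0 ≤ u ∧ u < c ∧ 0 ≤ v ∧ v < b ∧ 0 ≤ w ∧ w < a ∧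
      x = u * (a * b) + v * (a * c) + w * (b * c) + t * (a * b * c) := by
  obtain ⟨u, hu0, hu1, hu2⟩ := exists_res c (a * b) x hc (cac.mul_left cbc)
  obtain ⟨v, hv0, hv1, hv2⟩ := exists_res b (a * c) x hb (cab.mul_left cbc.symm)
  obtain ⟨w, hw0, hw1, hw2⟩ := exists_res a (b * c) x ha (cab.symm.mul_left cac.symm)
  have hdvd : a * b * c ∣ x - u * (a * b) - v * (a * c) - w * (b * c) := by
    have hA : a ∣ x - u * (a * b) - v * (a * c) - w * (b * c) := by
      obtain ⟨k, hk⟩ := hw2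
      exact ⟨k - u * b - v * c, by linear_combination hk⟩
    have hB : b ∣ x - u * (a * b) - v * (a * c) - w * (b * c) := by
      obtain ⟨k, hk⟩ := hv2
      exact ⟨k - u * a - w * c, by linear_combination hk⟩
    have hC : c ∣ x - u * (a * b) - v * (a * c) - w * (b * c) := by
      obtain ⟨k, hk⟩ := hu2
      exact ⟨k - v * a - w * b, by linear_combination hk⟩
    exact (cac.mul_left cbc).mul_dvd (cab.mul_dvd hA hB) hC
  obtain ⟨t, ht⟩ := hdvd
  exact ⟨u, v, w, t, hu0, hu1, hv0, hv1, hw0, hw1, by linear_combination ht⟩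

private lemma mem_iff (a b c : ℤ) (ha : 0 < a) (hb : 0 < b) (hc : 0 < c)
    (cab : IsCoprime a b) (cac : IsCoprime a c) (cbc : IsCoprime b c)
    (x u v w t : ℤ) (hu0 : 0 ≤ u) (hu1 : u < c) (hv0 : 0 ≤ v) (hv1 : v < b)
    (hw0 : 0 ≤ w) (hw1 : w < a)
    (hx : x = u * (a * b) + v * (a * c) + w * (b * c) + t * (a * b * c)) :
    (∃ U V W : ℕ, x = U * (a * b) + V * (a * c) + W * (b * c)) ↔ 0 ≤ t := by
  constructor
  · rintro ⟨U, V, W, hUVW⟩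
    have hU0 : (0 : ℤ) ≤ (U : ℤ) := Int.natCast_nonneg U
    have hV0 : (0 : ℤ) ≤ (V : ℤ) := Int.natCast_nonneg V
    have hW0 : (0 : ℤ) ≤ (W : ℤ) := Int.natCast_nonneg W
    have key : ((U : ℤ) - u) * (a * b) + ((V : ℤ) - v) * (a * c)
        + ((W : ℤ) - w) * (b * c) = t * (a * b * c) := by
      linear_combination hx - hUVW
    have hcU : c ∣ ((U : ℤ) - u) := by
      have : c ∣ ((U : ℤ) - u) * (a * b) :=
        ⟨t * (a * b) - ((V : ℤ) - v) * a - ((W : ℤ) - w) * b,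
          by linear_combination key⟩
      exact (cac.symm.mul_right cbc.symm).dvd_of_dvd_mul_right this
    have hbV : b ∣ ((V : ℤ) - v) := by
      have : b ∣ ((V : ℤ) - v) * (a * c) :=
        ⟨t * (a * c) - ((U : ℤ) - u) * a - ((W : ℤ) - w) * c,
          by linear_combination key⟩
      exact (cab.symm.mul_right cbc).dvd_of_dvd_mul_right this
    have haW : a ∣ ((W : ℤ) - w) := by
      have : a ∣ ((W : ℤ) - w) * (b * c) :=
        ⟨t * (b * c) - ((U : ℤ) - u) * b - ((V : ℤ) - v) * c,
          by linear_combination key⟩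
      exact (cab.mul_right cac).dvd_of_dvd_mul_right this
    have hU : 0 ≤ (U : ℤ) - u := by
      obtain ⟨k, hk⟩ := hcU
      rcases le_or_gt 0 k with h | h
      · rw [hk]; positivity
      · nlinarith
    have hV : 0 ≤ (V : ℤ) - v := by
      obtain ⟨k, hk⟩ := hbV
      rcases le_or_gt 0 k with h | h
      · rw [hk]; positivity
      · nlinarith
    have hW : 0 ≤ (W : ℤ) - w := by
      obtain ⟨k, hk⟩ := haW
      rcases le_or_gt 0 k with h | h
      · rw [hk]; positivity
      · nlinarith
    have habc : (0:ℤ) < a * b * c := by positivity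
    have hsum : 0 ≤ t * (a * b * c) := by
      rw [← key]
      have h1 : 0 ≤ ((U : ℤ) - u) * (a * b) := mul_nonneg hU (by positivity)
      have h2 : 0 ≤ ((V : ℤ) - v) * (a * c) := mul_nonneg hV (by positivity)
      have h3 : 0 ≤ ((W : ℤ) - w) * (b * c) := mul_nonneg hW (by positivity)
      linarith
    nlinarith [hsum, habc]
  · intro ht
    have hwt : 0 ≤ w + t * a := by positivity
    refine ⟨u.toNat, v.toNat, (w + t * a).toNat, ?_⟩
    rw [Int.toNat_of_nonneg hu0, Int.toNat_of_nonneg hv0, Int.toNat_of_nonneg hwt]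
    linear_combination hx

theorem supersymmetric_is_symmetric
    (a b c : ℤ) (ha : 2 ≤ a) (hab : a < b) (hbc : b < c)
    (cab : IsCoprime a b) (cac : IsCoprime a c) (cbc : IsCoprime b c) :
    ∀ x : ℤ,
      Xor' (∃ u v w : ℕ, x = u * (a * b) + v * (a * c) + w * (b * c))
        (∃ u v w : ℕ, 2 * a * b * c - (a * b + a * c + b * c) - x
          = u * (a * b) + v * (a * c) + w * (b * c)) := by
  intro x
  have ha0 : (0 : ℤ) < a := by linarith
  have hb0 : (0 : ℤ) < b := by linarith
  have hc0 : (0 : ℤ) < c := by linarith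
  obtain ⟨u, v, w, t, hu0, hu1, hv0, hv1, hw0, hw1, hx⟩ :=
    rep_exists a b c ha0 hb0 hc0 cab cac cbc x
  have h1 : (∃ U V W : ℕ, x = U * (a * b) + V * (a * c) + W * (b * c)) ↔ 0 ≤ t :=
    mem_iff a b c ha0 hb0 hc0 cab cac cbc x u v w t hu0 hu1 hv0 hv1 hw0 hw1 hx
  have h2 : (∃ U V W : ℕ, 2 * a * b * c - (a * b + a * c + b * c) - x
      = U * (a * b) + V * (a * c) + W * (b * c)) ↔ 0 ≤ (-1 - t) := by
    refine mem_iff a b c ha0 hb0 hc0 cab cac cbc _ (c - 1 - u) (b - 1 - v)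
      (a - 1 - w) (-1 - t) (by linarith) (by linarith) (by linarith) (by linarith)
      (by linarith) (by linarith) ?_
    linear_combination -hx
  rcases le_or_gt 0 t with h | h
  · exact Or.inl ⟨h1.mpr h, fun hmem => by linarith [h2.mp hmem]⟩
  · exact Or.inr ⟨h2.mpr (by linarith), fun hmem => by linarith [h1.mp hmem]⟩
end

section
/- Let a, b, c be pairwise relatively prime integers with 2 ≤ a < b < c, and let S = ⟨ab, ac, bc⟩. Then the genus of S (the number of positive integers not in S) equals abc − (ab + ac + bc − 1)/2. -/
/-!
Every element of `⟨ab, ac, bc⟩` can be written as `u·ab + v·ac + w·bc + k·abc` with `u < c`,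
`v < b`, `w < a`, and by the Chinese remainder theorem the `abc` numbers `m = u·ab + v·ac + w·bc`
in this box are pairwise incongruent modulo `abc` (they form the Apéry set with respect to `abc`).
Hence the gaps in the residue class of `m` are exactly the numbers below `m` in that class, and the
genus is `∑ ⌊m / abc⌋` (Selmer's formula). Summing the `m` over the box gives the closed form.
-/

open Finset

theorem card_filter_range_modEq_self {N : ℕ} (hN : 0 < N) (x : ℕ) :
    #{n ∈ range x | n ≡ x [MOD N]} = x / N := by
  rw [← Nat.count_eq_card_filter_range, Nat.count_modEq_card x hN x]
  simp

section Selmer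

variable {ι : Type*} {T : Finset ι} {f : ι → ℕ} {N : ℕ}

theorem image_mod_eq_range (hN : 0 < N) (hT : #T = N)
    (hinj : Set.InjOn (fun t => f t % N) T) : T.image (fun t => f t % N) = range N := by
  refine eq_of_subset_of_card_le (fun r hr => ?_) ?_
  · obtain ⟨t, -, rfl⟩ := mem_image.1 hr
    exact mem_range.2 (Nat.mod_lt _ hN)
  · rw [card_range, card_image_of_injOn hinj, hT]

theorem sum_mod_eq_sum_range (hN : 0 < N) (hT : #T = N)
    (hinj : Set.InjOn (fun t => f t % N) T) : ∑ t ∈ T, f t % N = ∑ r ∈ range N, r := by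
  rw [← image_mod_eq_range hN hT hinj, sum_image hinj]

theorem setOf_not_exists_add_mul_eq_biUnion (hN : 0 < N) (hT : #T = N)
    (hinj : Set.InjOn (fun t => f t % N) T) :
    {n | ¬ ∃ t ∈ T, ∃ k, n = f t + k * N} =
      ↑(T.biUnion fun t => {n ∈ range (f t) | n ≡ f t [MOD N]}) := by
  ext n
  simp only [Set.mem_ofPred_eq, coe_biUnion, Set.mem_iUnion, mem_coe, mem_filter, mem_range,
    exists_prop]
  constructor
  · intro hn
    obtain ⟨t, ht, hmod⟩ : ∃ t ∈ T, f t % N = n % N := by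
      have hr : n % N ∈ T.image (fun t => f t % N) := by
        rw [image_mod_eq_range hN hT hinj]
        exact mem_range.2 (Nat.mod_lt n hN)
      simpa using hr
    refine ⟨t, ht, not_le.1 fun hle => hn ⟨t, ht, (n - f t) / N, ?_⟩, hmod.symm⟩
    rw [Nat.div_mul_cancel ((Nat.modEq_iff_dvd' hle).1 hmod)]
    omega
  · rintro ⟨t, ht, hlt, hmod⟩ ⟨t', ht', k, rfl⟩
    obtain rfl : t' = t := hinj ht' ht (by simpa [Nat.ModEq] using hmod)
    omega

theorem ncard_setOf_not_exists_add_mul_eq_sum_div (hN : 0 < N) (hT : #T = N)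
    (hinj : Set.InjOn (fun t => f t % N) T) :
    {n | ¬ ∃ t ∈ T, ∃ k, n = f t + k * N}.ncard = ∑ t ∈ T, f t / N := by
  rw [setOf_not_exists_add_mul_eq_biUnion hN hT hinj, Set.ncard_coe_finset, card_biUnion]
  · exact sum_congr rfl fun t _ => card_filter_range_modEq_self hN (f t)
  · intro t ht t' ht' hne
    refine disjoint_left.2 fun n hn hn' => hne (hinj ht ht' ?_)
    exact ((mem_filter.1 hn).2.symm.trans (mem_filter.1 hn').2 : f t ≡ f t' [MOD N])

theorem mul_ncard_add_sum_range_eq_sum (hN : 0 < N) (hT : #T = N)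
    (hinj : Set.InjOn (fun t => f t % N) T) :
    N * {n | ¬ ∃ t ∈ T, ∃ k, n = f t + k * N}.ncard + ∑ r ∈ range N, r = ∑ t ∈ T, f t := by
  rw [ncard_setOf_not_exists_add_mul_eq_sum_div hN hT hinj, ← sum_mod_eq_sum_range hN hT hinj,
    mul_sum, ← sum_add_distrib]
  exact sum_congr rfl fun t _ => Nat.div_add_mod (f t) N

end Selmer

namespace Supersymmetric

def comb (a b c : ℕ) (t : ℕ × ℕ × ℕ) : ℕ := t.1 * (a * b) + t.2.1 * (a * c) + t.2.2 * (b * c)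

def box (a b c : ℕ) : Finset (ℕ × ℕ × ℕ) := range c ×ˢ range b ×ˢ range a

variable {a b c : ℕ}

theorem comb_modEq_left (t : ℕ × ℕ × ℕ) : comb a b c t ≡ t.2.2 * (b * c) [MOD a] := by
  unfold comb Nat.ModEq
  rw [show t.1 * (a * b) + t.2.1 * (a * c) + t.2.2 * (b * c)
      = t.2.2 * (b * c) + a * (t.1 * b + t.2.1 * c) by ring, Nat.add_mul_mod_self_left]

theorem comb_modEq_mid (t : ℕ × ℕ × ℕ) : comb a b c t ≡ t.2.1 * (a * c) [MOD b] := by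
  unfold comb Nat.ModEq
  rw [show t.1 * (a * b) + t.2.1 * (a * c) + t.2.2 * (b * c)
      = t.2.1 * (a * c) + b * (t.1 * a + t.2.2 * c) by ring, Nat.add_mul_mod_self_left]

theorem comb_modEq_right (t : ℕ × ℕ × ℕ) : comb a b c t ≡ t.1 * (a * b) [MOD c] := by
  unfold comb Nat.ModEq
  rw [show t.1 * (a * b) + t.2.1 * (a * c) + t.2.2 * (b * c)
      = t.1 * (a * b) + c * (t.2.1 * a + t.2.2 * b) by ring, Nat.add_mul_mod_self_left]

theorem card_box : #(box a b c) = a * b * c := by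
  simp only [box, card_product, card_range]
  ring

theorem eq_of_mul_modEq_mul {m x u v : ℕ} (hx : Nat.Coprime m x) (hu : u < m) (hv : v < m)
    (h : u * x ≡ v * x [MOD m]) : u = v :=
  (h.cancel_right_of_coprime hx).eq_of_lt_of_lt hu hv

theorem injOn_comb_mod (hab : Nat.Coprime a b) (hac : Nat.Coprime a c) (hbc : Nat.Coprime b c) :
    Set.InjOn (fun t => comb a b c t % (a * b * c)) (box a b c) := by
  rintro ⟨u, v, w⟩ ht ⟨u', v', w'⟩ ht' h
  simp only [box, coe_product, coe_range, Set.mem_prod, Set.mem_Iio] at ht ht'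
  have h : comb a b c (u, v, w) ≡ comb a b c (u', v', w') [MOD a * b * c] := h
  have hw := eq_of_mul_modEq_mul (hab.mul_right hac) ht.2.2 ht'.2.2 <|
    (comb_modEq_left _).symm.trans ((h.of_dvd ⟨b * c, by ring⟩).trans (comb_modEq_left _))
  have hv := eq_of_mul_modEq_mul (hab.symm.mul_right hbc) ht.2.1 ht'.2.1 <|
    (comb_modEq_mid _).symm.trans ((h.of_dvd ⟨a * c, by ring⟩).trans (comb_modEq_mid _))
  have hu := eq_of_mul_modEq_mul (hac.symm.mul_right hbc.symm) ht.1 ht'.1 <|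
    (comb_modEq_right _).symm.trans ((h.of_dvd ⟨a * b, by ring⟩).trans (comb_modEq_right _))
  simp [hu, hv, hw]

theorem exists_eq_comb_iff (ha : 0 < a) (hb : 0 < b) (hc : 0 < c) (n : ℕ) :
    (∃ u v w : ℕ, n = u * (a * b) + v * (a * c) + w * (b * c)) ↔
      ∃ t ∈ box a b c, ∃ k, n = comb a b c t + k * (a * b * c) := by
  constructor
  · rintro ⟨u, v, w, rfl⟩
    refine ⟨(u % c, v % b, w % a), by simp [box, Nat.mod_lt, *], u / c + v / b + w / a, ?_⟩
    conv_lhs => rw [← Nat.mod_add_div u c, ← Nat.mod_add_div v b, ← Nat.mod_add_div w a]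
    simp only [comb]
    ring
  · rintro ⟨⟨u, v, w⟩, -, k, rfl⟩
    exact ⟨u + k * c, v, w, by simp only [comb]; ring⟩

theorem sum_range_id_mul_two_add_self (n : ℕ) : (∑ i ∈ range n, i) * 2 + n = n * n := by
  rw [sum_range_id_mul_two]
  cases n <;> simp [Nat.mul_succ]

theorem two_mul_sum_comb_box_add :
    2 * ∑ t ∈ box a b c, comb a b c t + a * b * c * (a * b + a * c + b * c)
      = 3 * (a * b * c) * (a * b * c) := by
  have hsum : ∑ t ∈ box a b c, comb a b c t
      = a * b * (a * b) * ∑ i ∈ range c, i + a * c * (a * c) * ∑ i ∈ range b, i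
        + b * c * (b * c) * ∑ i ∈ range a, i := by
    simp only [box, comb, sum_product, sum_add_distrib, sum_const, card_product, card_range,
      smul_eq_mul, ← sum_mul]
    rw [← mul_sum, ← mul_sum]
    ring
  have ha := sum_range_id_mul_two_add_self a
  have hb := sum_range_id_mul_two_add_self b
  have hc := sum_range_id_mul_two_add_self c
  rw [hsum]
  nlinarith

theorem two_mul_ncard_add_eq (hN : 0 < a * b * c) (hab : Nat.Coprime a b)
    (hac : Nat.Coprime a c) (hbc : Nat.Coprime b c) :
    2 * {n | ¬ ∃ t ∈ box a b c, ∃ k, n = comb a b c t + k * (a * b * c)}.ncard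
      + (a * b + a * c + b * c) = 2 * (a * b * c) + 1 := by
  have hselmer := mul_ncard_add_sum_range_eq_sum hN card_box (injOn_comb_mod hab hac hbc)
  have hgauss := sum_range_id_mul_two_add_self (a * b * c)
  have hsum := two_mul_sum_comb_box_add (a := a) (b := b) (c := c)
  refine Nat.eq_of_mul_eq_mul_left hN ?_
  nlinarith

end Supersymmetric

theorem genus_supersymmetric_general
    (a b c : ℕ) (ha : 2 ≤ a)
    (cab : Nat.Coprime a b) (cac : Nat.Coprime a c) (cbc : Nat.Coprime b c) :
    {n : ℕ | ¬ ∃ u v w : ℕ, n = u * (a * b) + v * (a * c) + w * (b * c)}.ncard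
      = a * b * c - (a * b + a * c + b * c - 1) / 2 := by
  have hb : 0 < b := Nat.pos_of_ne_zero fun hb => by simp [hb] at cab; omega
  have hc : 0 < c := Nat.pos_of_ne_zero fun hc => by simp [hc] at cac; omega
  simp_rw [Supersymmetric.exists_eq_comb_iff (by omega : 0 < a) hb hc]
  have := Supersymmetric.two_mul_ncard_add_eq (by positivity) cab cac cbc
  omega

theorem genus_supersymmetric
    (a b c : ℕ) (ha : 2 ≤ a) (hab : a < b) (hbc : b < c)
    (cab : Nat.Coprime a b) (cac : Nat.Coprime a c) (cbc : Nat.Coprime b c) :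
    {n : ℕ | ¬ ∃ u v w : ℕ, n = u * (a * b) + v * (a * c) + w * (b * c)}.ncard
      = a * b * c - (a * b + a * c + b * c - 1) / 2 :=
  genus_supersymmetric_general a b c ha cab cac cbc
end

section
/- Let a, b, c be pairwise relatively prime integers with 2 ≤ a < b < c. Every integer n may be written uniquely as n = x·ab + y·ac + z·bc with x, y, z integers satisfying 0 ≤ x ≤ c−1 and 0 ≤ y ≤ b−1. -/
theorem unique_representation
    (a b c : ℤ) (ha : 2 ≤ a) (hab : a < b) (hbc : b < c)
    (cab : IsCoprime a b) (cac : IsCoprime a c) (cbc : IsCoprime b c) :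
    ∀ n : ℤ, ∃! p : ℤ × ℤ × ℤ,
      (0 ≤ p.1 ∧ p.1 ≤ c - 1) ∧ (0 ≤ p.2.1 ∧ p.2.1 ≤ b - 1) ∧
        n = p.1 * (a * b) + p.2.1 * (a * c) + p.2.2 * (b * c) := by
  intro n
  have hb0 : 0 < b := by linarith
  have hc0 : 0 < c := by linarith
  have habc : IsCoprime (a * b) c := cac.mul_left cbc
  have hacb : IsCoprime (a * c) b := cab.mul_left cbc.symm
  obtain ⟨u, v, huv⟩ := cac.mul_left cbc
  obtain ⟨s, t, hst⟩ := cab.mul_left cbc.symm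
  set x := (n * u) % c with hxdef
  have hx0 : 0 ≤ x := Int.emod_nonneg _ (by positivity)
  have hx1 : x < c := Int.emod_lt_of_pos _ hc0
  have hex : x = n * u - c * (n * u / c) := by rw [hxdef, Int.emod_def]
  have hdx : c ∣ n - x * (a * b) := by
    refine ⟨n * v + (n * u / c) * (a * b), ?_⟩
    linear_combination -n * huv - (a * b) * hex
  set m := n - x * (a * b) with hmdef
  set y := (m * s) % b with hydef
  have hy0 : 0 ≤ y := Int.emod_nonneg _ (by positivity)
  have hy1 : y < b := Int.emod_lt_of_pos _ hb0
  have hey : y = m * s - b * (m * s / b) := by rw [hydef, Int.emod_def]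
  have hdyb : b ∣ m - y * (a * c) := by
    refine ⟨m * t + (m * s / b) * (a * c), ?_⟩
    linear_combination -m * hst - (a * c) * hey
  have hdyc : c ∣ m - y * (a * c) := by
    obtain ⟨k, hk⟩ := hdx
    exact ⟨k - y * a, by linear_combination hk⟩
  have hbc' : b * c ∣ m - y * (a * c) := cbc.mul_dvd hdyb hdyc
  set z := (m - y * (a * c)) / (b * c) with hzdef
  have hz : z * (b * c) = m - y * (a * c) := by
    rw [hzdef]; exact Int.ediv_mul_cancel hbc'
  have hbc0 : (b : ℤ) * c ≠ 0 := by positivity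
  refine ⟨⟨x, y, z⟩, ⟨⟨hx0, by show x ≤ c - 1; omega⟩, ⟨hy0, by show y ≤ b - 1; omega⟩, by
    show n = x * (a * b) + y * (a * c) + z * (b * c); linear_combination -hz⟩, ?_⟩
  rintro ⟨x', y', z'⟩ ⟨⟨hx'0, hx'1⟩, ⟨hy'0, hy'1⟩, hn'⟩
  dsimp only at hx'0 hx'1 hy'0 hy'1 hn' ⊢
  have heq : x' * (a * b) + y' * (a * c) + z' * (b * c)
      = x * (a * b) + y * (a * c) + z * (b * c) := by
    linear_combination -hn' - hz
  have hdx' : c ∣ (x' - x) * (a * b) := by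
    refine ⟨(y - y') * a + (z - z') * b, ?_⟩
    linear_combination heq
  have hcx : c ∣ x' - x := (habc.symm).dvd_of_dvd_mul_right hdx'
  have hxx : x' = x := by
    have := Int.eq_zero_of_abs_lt_dvd hcx (by rw [abs_lt]; omega)
    omega
  subst hxx
  have hdy' : b ∣ (y' - y) * (a * c) := by
    refine ⟨(z - z') * c, ?_⟩
    linear_combination heq
  have hby : b ∣ y' - y := (hacb.symm).dvd_of_dvd_mul_right hdy'
  have hyy : y' = y := by
    have := Int.eq_zero_of_abs_lt_dvd hby (by rw [abs_lt]; omega)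
    omega
  subst hyy
  have hzz : z' = z := by
    have : z' * (b * c) = z * (b * c) := by linear_combination heq
    exact mul_right_cancel₀ hbc0 this
  subst hzz
  rfl
end

section
/- Let a, b, c be pairwise relatively prime integers with 2 ≤ a < b < c. Suppose (x, y, z) ∈ ℤ³ satisfies n = x·ab + y·ac + z·bc. Then the set of all (x', y', z') ∈ ℤ³ with n = x'·ab + y'·ac + z'·bc is exactly the set of triples (x + k₁c, y + k₂b, z + k₃a) with k₁, k₂, k₃ ∈ ℤ satisfying k₁ + k₂ + k₃ = 0. -/
theorem factorizations_description
    (a b c : ℤ) (ha : 2 ≤ a) (hab : a < b) (hbc : b < c)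
    (cab : IsCoprime a b) (cac : IsCoprime a c) (cbc : IsCoprime b c)
    (n x y z : ℤ) (hfac : n = x * (a * b) + y * (a * c) + z * (b * c)) :
    {p : ℤ × ℤ × ℤ | n = p.1 * (a * b) + p.2.1 * (a * c) + p.2.2 * (b * c)}
      = {p : ℤ × ℤ × ℤ | ∃ k₁ k₂ k₃ : ℤ, k₁ + k₂ + k₃ = 0 ∧
          p = (x + k₁ * c, y + k₂ * b, z + k₃ * a)} := by
  ext ⟨u, v, w⟩
  simp only [Set.mem_setOf_eq]
  constructor
  · intro h
    have h0 : (u - x) * (a * b) + (v - y) * (a * c) + (w - z) * (b * c) = 0 := by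
      linarith [hfac, h]
    have hc : c ∣ (u - x) * (a * b) := by
      have : c ∣ (v - y) * (a * c) + (w - z) * (b * c) :=
        dvd_add ⟨(v - y) * a, by ring⟩ ⟨(w - z) * b, by ring⟩
      have := dvd_neg.mpr this
      refine (dvd_iff_exists_eq_mul_left.mpr ?_).trans dvd_rfl
      obtain ⟨k, hk⟩ := this
      exact ⟨k, by linarith [hk]⟩
    have hc' : c ∣ (u - x) := (cac.symm.mul_right cbc.symm).dvd_of_dvd_mul_right hc
    have hb : b ∣ (v - y) := by
      have : b ∣ (v - y) * (a * c) := by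
        have h1 : b ∣ (u - x) * (a * b) := ⟨(u - x) * a, by ring⟩
        have h3 : b ∣ (w - z) * (b * c) := ⟨(w - z) * c, by ring⟩
        have : (v - y) * (a * c) = -((u - x) * (a * b)) - (w - z) * (b * c) := by
          linarith [h0]
        rw [this]; exact dvd_sub (dvd_neg.mpr h1) h3
      exact (cab.symm.mul_right cbc).dvd_of_dvd_mul_right this
    have haz : a ∣ (w - z) := by
      have : a ∣ (w - z) * (b * c) := by
        have h1 : a ∣ (u - x) * (a * b) := ⟨(u - x) * b, by ring⟩
        have h2 : a ∣ (v - y) * (a * c) := ⟨(v - y) * c, by ring⟩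
        have : (w - z) * (b * c) = -((u - x) * (a * b)) - (v - y) * (a * c) := by
          linarith [h0]
        rw [this]; exact dvd_sub (dvd_neg.mpr h1) h2
      exact (cab.mul_right cac).dvd_of_dvd_mul_right this
    obtain ⟨k₁, hk₁⟩ := hc'
    obtain ⟨k₂, hk₂⟩ := hb
    obtain ⟨k₃, hk₃⟩ := haz
    refine ⟨k₁, k₂, k₃, ?_, by
      simp only [Prod.mk.injEq]
      refine ⟨by linarith [hk₁, mul_comm c k₁], by linarith [hk₂, mul_comm b k₂],
        by linarith [hk₃, mul_comm a k₃]⟩⟩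
    have habc : (k₁ + k₂ + k₃) * (a * b * c) = 0 := by
      have e1 : (u - x) * (a * b) = k₁ * c * (a * b) := by rw [hk₁]; ring
      have e2 : (v - y) * (a * c) = k₂ * b * (a * c) := by rw [hk₂]; ring
      have e3 : (w - z) * (b * c) = k₃ * a * (b * c) := by rw [hk₃]; ring
      nlinarith [h0, e1, e2, e3]
    have hane : a * b * c ≠ 0 := by
      have : (0:ℤ) < a * b * c := by
        have := mul_pos (mul_pos (by linarith : (0:ℤ) < a) (by linarith : (0:ℤ) < b))
          (by linarith : (0:ℤ) < c)
        exact this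
      exact ne_of_gt this
    exact mul_eq_zero.mp habc |>.resolve_right hane
  · rintro ⟨k₁, k₂, k₃, hsum, heq⟩
    simp only [Prod.mk.injEq] at heq
    obtain ⟨h1, h2, h3⟩ := heq
    subst h1 h2 h3
    have : k₃ = -k₁ - k₂ := by linarith
    subst this
    rw [hfac]; ring
end

section
/- Let a, b, c be pairwise relatively prime integers with 2 ≤ a < b < c, and let S = ⟨ab, ac, bc⟩ ⊆ ℕ. Suppose an integer n satisfies n = x·ab + y·ac + z·bc with 0 ≤ x ≤ c−1, 0 ≤ y ≤ b−1, and z ∈ ℤ. Then n ∈ S if and only if z ≥ 0. -/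
theorem membership_criterion
    (a b c : ℤ) (ha : 2 ≤ a) (hab : a < b) (hbc : b < c)
    (cab : IsCoprime a b) (cac : IsCoprime a c) (cbc : IsCoprime b c)
    (n x y z : ℤ) (hx : 0 ≤ x) (hx' : x ≤ c - 1) (hy : 0 ≤ y) (hy' : y ≤ b - 1)
    (hfac : n = x * (a * b) + y * (a * c) + z * (b * c)) :
    (∃ u v w : ℕ, n = u * (a * b) + v * (a * c) + w * (b * c)) ↔ 0 ≤ z := by
  have ha0 : (0:ℤ) < a := by linarith
  have hb0 : (0:ℤ) < b := by linarith
  have hc0 : (0:ℤ) < c := by linarith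
  constructor
  · rintro ⟨u, v, w, hn⟩
    have hu : (0:ℤ) ≤ (u:ℤ) := Int.natCast_nonneg u
    have hv : (0:ℤ) ≤ (v:ℤ) := Int.natCast_nonneg v
    have hw : (0:ℤ) ≤ (w:ℤ) := Int.natCast_nonneg w
    have heq : x * (a * b) + y * (a * c) + z * (b * c)
        = (u:ℤ) * (a * b) + (v:ℤ) * (a * c) + (w:ℤ) * (b * c) := by
      rw [← hfac, hn]
    have hdvdc : c ∣ ((u:ℤ) - x) := by
      have h1 : c ∣ ((u:ℤ) - x) * (a * b) :=
        ⟨(y - v) * a + (z - w) * b, by ring_nf; linarith [heq]⟩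
      exact (cac.symm.mul_right cbc.symm).dvd_of_dvd_mul_right h1
    have hdvdb : b ∣ ((v:ℤ) - y) := by
      have h1 : b ∣ ((v:ℤ) - y) * (a * c) :=
        ⟨(x - u) * a + (z - w) * c, by ring_nf; linarith [heq]⟩
      exact (cab.symm.mul_right cbc).dvd_of_dvd_mul_right h1
    obtain ⟨k, hk⟩ := hdvdc
    obtain ⟨m, hm⟩ := hdvdb
    have hk0 : 0 ≤ k := by nlinarith
    have hm0 : 0 ≤ m := by nlinarith
    have hz : z * (b * c) = (c * k) * (a * b) + (b * m) * (a * c) + (w:ℤ) * (b * c) := by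
      rw [← hk, ← hm]; linarith [heq]
    have hzn : 0 ≤ z * (b * c) := by
      rw [hz]
      have := mul_nonneg (mul_nonneg hc0.le hk0) (mul_nonneg ha0.le hb0.le)
      have := mul_nonneg (mul_nonneg hb0.le hm0) (mul_nonneg ha0.le hc0.le)
      have := mul_nonneg hw (mul_nonneg hb0.le hc0.le)
      nlinarith
    nlinarith [hzn, mul_pos hb0 hc0]
  · intro hz
    refine ⟨x.toNat, y.toNat, z.toNat, ?_⟩
    rw [Int.toNat_of_nonneg hx, Int.toNat_of_nonneg hy, Int.toNat_of_nonneg hz]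
    exact hfac
end

section
/- Let a, b, c be pairwise relatively prime integers with 2 ≤ a < b < c, and let S = ⟨ab, ac, bc⟩. Let γ be the unique integer with 1 ≤ γ ≤ c−1 and γ·ab ≡ 1 (mod c), β the unique integer with 1 ≤ β ≤ b−1 and β·ac ≡ 1 (mod b), and α the unique integer with 1 ≤ α ≤ a−1 and α·bc ≡ 1 (mod a). Then the smallest element of S congruent to 1 modulo abc is γ·ab + β·ac + α·bc. -/
theorem smallest_congruent_one
    (a b c α β γ : ℕ) (ha : 2 ≤ a) (hab : a < b) (hbc : b < c)
    (cab : Nat.Coprime a b) (cac : Nat.Coprime a c) (cbc : Nat.Coprime b c)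
    (hγ : 1 ≤ γ ∧ γ ≤ c - 1 ∧ γ * (a * b) % c = 1 % c)
    (hβ : 1 ≤ β ∧ β ≤ b - 1 ∧ β * (a * c) % b = 1 % b)
    (hα : 1 ≤ α ∧ α ≤ a - 1 ∧ α * (b * c) % a = 1 % a) :
    IsLeast {n : ℕ | (∃ u v w : ℕ, n = u * (a * b) + v * (a * c) + w * (b * c)) ∧
        n % (a * b * c) = 1}
      (γ * (a * b) + β * (a * c) + α * (b * c)) := by
  obtain ⟨hγ1, hγ2, hγ3⟩ := hγ
  obtain ⟨hβ1, hβ2, hβ3⟩ := hβ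
  obtain ⟨hα1, hα2, hα3⟩ := hα
  have hb : 2 ≤ b := by omega
  have hc : 2 ≤ c := by omega
  have hγc : γ < c := by omega
  have hβb : β < b := by omega
  have hαa : α < a := by omega
  have habc : 1 < a * b * c := by
    have h8 : 2 * 2 * 2 ≤ a * b * c := by gcongr
    omega
  have hγ3' : γ * (a * b) ≡ 1 [MOD c] := hγ3
  have hβ3' : β * (a * c) ≡ 1 [MOD b] := hβ3
  have hα3' : α * (b * c) ≡ 1 [MOD a] := hα3
  set N := γ * (a * b) + β * (a * c) + α * (b * c) with hN
  -- N ≡ 1 mod a, b, c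
  have hma : N ≡ 1 [MOD a] := by
    have h1 : γ * (a * b) ≡ 0 [MOD a] := (Nat.modEq_zero_iff_dvd).mpr ⟨γ * b, by ring⟩
    have h2 : β * (a * c) ≡ 0 [MOD a] := (Nat.modEq_zero_iff_dvd).mpr ⟨β * c, by ring⟩
    simpa using (h1.add h2).add hα3'
  have hmb : N ≡ 1 [MOD b] := by
    have h1 : γ * (a * b) ≡ 0 [MOD b] := (Nat.modEq_zero_iff_dvd).mpr ⟨γ * a, by ring⟩
    have h3 : α * (b * c) ≡ 0 [MOD b] := (Nat.modEq_zero_iff_dvd).mpr ⟨α * c, by ring⟩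
    simpa using (h1.add hβ3').add h3
  have hmc : N ≡ 1 [MOD c] := by
    have h2 : β * (a * c) ≡ 0 [MOD c] := (Nat.modEq_zero_iff_dvd).mpr ⟨β * a, by ring⟩
    have h3 : α * (b * c) ≡ 0 [MOD c] := (Nat.modEq_zero_iff_dvd).mpr ⟨α * b, by ring⟩
    simpa using (hγ3'.add h2).add h3
  have hmab : N ≡ 1 [MOD a * b] := (Nat.modEq_and_modEq_iff_modEq_mul cab).mp ⟨hma, hmb⟩
  have hmabc : N ≡ 1 [MOD a * b * c] :=
    (Nat.modEq_and_modEq_iff_modEq_mul (Nat.Coprime.mul cac cbc)).mp ⟨hmab, hmc⟩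
  constructor
  · refine ⟨⟨γ, β, α, rfl⟩, ?_⟩
    have := hmabc
    unfold Nat.ModEq at this
    rwa [Nat.mod_eq_of_lt habc] at this
  · rintro n ⟨⟨u, v, w, rfl⟩, hmod⟩
    have hn1 : u * (a * b) + v * (a * c) + w * (b * c) ≡ 1 [MOD a * b * c] := by
      unfold Nat.ModEq
      rw [hmod, Nat.mod_eq_of_lt habc]
    have hu : γ ≤ u := by
      have hnc : u * (a * b) + v * (a * c) + w * (b * c) ≡ 1 [MOD c] :=
        hn1.of_dvd ⟨a * b, by ring⟩
      have h2 : v * (a * c) ≡ 0 [MOD c] := (Nat.modEq_zero_iff_dvd).mpr ⟨v * a, by ring⟩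
      have h3 : w * (b * c) ≡ 0 [MOD c] := (Nat.modEq_zero_iff_dvd).mpr ⟨w * b, by ring⟩
      have huc : u * (a * b) ≡ 1 [MOD c] := by
        have := ((Nat.ModEq.refl (u * (a * b))).add h2).add h3
        simpa using this.symm.trans hnc
      have : u ≡ γ [MOD c] :=
        Nat.ModEq.cancel_right_of_coprime (by simpa [Nat.Coprime] using (Nat.Coprime.mul cac cbc).symm)
          (huc.trans hγ3'.symm)
      calc γ = γ % c := (Nat.mod_eq_of_lt hγc).symm
        _ = u % c := this.symm
        _ ≤ u := Nat.mod_le u c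
    have hv : β ≤ v := by
      have hnb : u * (a * b) + v * (a * c) + w * (b * c) ≡ 1 [MOD b] :=
        hn1.of_dvd ⟨a * c, by ring⟩
      have h1 : u * (a * b) ≡ 0 [MOD b] := (Nat.modEq_zero_iff_dvd).mpr ⟨u * a, by ring⟩
      have h3 : w * (b * c) ≡ 0 [MOD b] := (Nat.modEq_zero_iff_dvd).mpr ⟨w * c, by ring⟩
      have hvb : v * (a * c) ≡ 1 [MOD b] := by
        have := (h1.add (Nat.ModEq.refl (v * (a * c)))).add h3
        simpa using this.symm.trans hnb
      have : v ≡ β [MOD b] :=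
        Nat.ModEq.cancel_right_of_coprime
          (by simpa [Nat.Coprime] using (Nat.Coprime.mul cab cbc.symm).symm)
          (hvb.trans hβ3'.symm)
      calc β = β % b := (Nat.mod_eq_of_lt hβb).symm
        _ = v % b := this.symm
        _ ≤ v := Nat.mod_le v b
    have hw : α ≤ w := by
      have hna : u * (a * b) + v * (a * c) + w * (b * c) ≡ 1 [MOD a] :=
        hn1.of_dvd ⟨b * c, by ring⟩
      have h1 : u * (a * b) ≡ 0 [MOD a] := (Nat.modEq_zero_iff_dvd).mpr ⟨u * b, by ring⟩
      have h2 : v * (a * c) ≡ 0 [MOD a] := (Nat.modEq_zero_iff_dvd).mpr ⟨v * c, by ring⟩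
      have hwa : w * (b * c) ≡ 1 [MOD a] := by
        have := (h1.add h2).add (Nat.ModEq.refl (w * (b * c)))
        simpa using this.symm.trans hna
      have : w ≡ α [MOD a] :=
        Nat.ModEq.cancel_right_of_coprime
          (by simpa [Nat.Coprime] using (Nat.Coprime.mul cab.symm cac.symm).symm)
          (hwa.trans hα3'.symm)
      calc α = α % a := (Nat.mod_eq_of_lt hαa).symm
        _ = w % a := this.symm
        _ ≤ w := Nat.mod_le w a
    exact add_le_add (add_le_add (Nat.mul_le_mul_right _ hu) (Nat.mul_le_mul_right _ hv))
      (Nat.mul_le_mul_right _ hw)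
end

section
/- Let a, b, c be pairwise relatively prime integers with 2 ≤ a < b < c, let S = ⟨ab, ac, bc⟩, and suppose abc + 1 ∉ S. Let α, β, γ be as follows: 1 ≤ γ ≤ c−1 with γ·ab ≡ 1 (mod c); 1 ≤ β ≤ b−1 with β·ac ≡ 1 (mod b); 1 ≤ α ≤ a−1 with α·bc ≡ 1 (mod a). Let S' = ⟨ab, ac, bc, abc+1⟩. Then g(S') = g(S) − (a−α)(b−β)(c−γ), where g denotes genus (number of gaps). -/
private lemma resC (a b c U V W : ℕ) :
    U*(a*b) + V*(a*c) + W*(b*c) ≡ U*(a*b) [MOD c] := by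
  have h : U*(a*b) + V*(a*c) + W*(b*c) = U*(a*b) + (V*a + W*b)*c := by ring
  rw [h]; exact Nat.add_mul_mod_self_right _ _ _

private lemma resB (a b c U V W : ℕ) :
    U*(a*b) + V*(a*c) + W*(b*c) ≡ V*(a*c) [MOD b] := by
  have h : U*(a*b) + V*(a*c) + W*(b*c) = V*(a*c) + (U*a + W*c)*b := by ring
  rw [h]; exact Nat.add_mul_mod_self_right _ _ _

private lemma resA (a b c U V W : ℕ) :
    U*(a*b) + V*(a*c) + W*(b*c) ≡ W*(b*c) [MOD a] := by
  have h : U*(a*b) + V*(a*c) + W*(b*c) = W*(b*c) + (U*b + V*c)*a := by ring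
  rw [h]; exact Nat.add_mul_mod_self_right _ _ _

set_option maxHeartbeats 1000000 in
theorem genus_Sprime
    (a b c α β γ : ℕ) (ha : 2 ≤ a) (hab : a < b) (hbc : b < c)
    (cab : Nat.Coprime a b) (cac : Nat.Coprime a c) (cbc : Nat.Coprime b c)
    (hγ : 1 ≤ γ ∧ γ ≤ c - 1 ∧ γ * (a * b) % c = 1 % c)
    (hβ : 1 ≤ β ∧ β ≤ b - 1 ∧ β * (a * c) % b = 1 % b)
    (hα : 1 ≤ α ∧ α ≤ a - 1 ∧ α * (b * c) % a = 1 % a)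
    (hnot : ¬ ∃ u v w : ℕ, a * b * c + 1 = u * (a * b) + v * (a * c) + w * (b * c)) :
    {n : ℕ | ¬ ∃ u v w s : ℕ,
        n = u * (a * b) + v * (a * c) + w * (b * c) + s * (a * b * c + 1)}.ncard
      + (a - α) * (b - β) * (c - γ)
      = {n : ℕ | ¬ ∃ u v w : ℕ, n = u * (a * b) + v * (a * c) + w * (b * c)}.ncard := by
  classical
  obtain ⟨hγ1, hγ2, hγ3⟩ := hγ
  obtain ⟨hβ1, hβ2, hβ3⟩ := hβ
  obtain ⟨hα1, hα2, hα3⟩ := hα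
  have ha0 : 0 < a := by omega
  have hb0 : 0 < b := by omega
  have hc0 : 0 < c := by omega
  have hαa : α < a := by omega
  have hβb : β < b := by omega
  have hγc : γ < c := by omega
  have cabc : Nat.Coprime (a*b) c := cac.mul cbc
  have cacb : Nat.Coprime (a*c) b := cab.mul cbc.symm
  have cbca : Nat.Coprime (b*c) a := cab.symm.mul cac.symm
  have hab0 : 0 < a*b := Nat.mul_pos ha0 hb0
  have hac0 : 0 < a*c := Nat.mul_pos ha0 hc0
  have hbc0 : 0 < b*c := Nat.mul_pos hb0 hc0
  have habc0 : 0 < a*b*c := Nat.mul_pos hab0 hc0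
  have hmγ : γ * (a*b) ≡ 1 [MOD c] := hγ3
  have hmβ : β * (a*c) ≡ 1 [MOD b] := hβ3
  have hmα : α * (b*c) ≡ 1 [MOD a] := hα3
  -- helper for products bounds
  have hmul : ∀ x y k : ℕ, x + 1 ≤ y → x*k + k ≤ y*k := by
    intro x y k h
    calc x*k + k = (x+1)*k := by ring
      _ ≤ y*k := Nat.mul_le_mul h le_rfl
  -- the key identity
  have key : γ*(a*b) + β*(a*c) + α*(b*c) = 2*(a*b*c) + 1 := by
    have h1 : γ*(a*b) + β*(a*c) + α*(b*c) ≡ 1 [MOD c] :=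
      (resC a b c γ β α).trans hmγ
    have h2 : γ*(a*b) + β*(a*c) + α*(b*c) ≡ 1 [MOD b] :=
      (resB a b c γ β α).trans hmβ
    have h3 : γ*(a*b) + β*(a*c) + α*(b*c) ≡ 1 [MOD a] :=
      (resA a b c γ β α).trans hmα
    have hmab : γ*(a*b) + β*(a*c) + α*(b*c) ≡ 1 [MOD a*b] :=
      (Nat.modEq_and_modEq_iff_modEq_mul cab).mp ⟨h3, h2⟩
    have hmabc : γ*(a*b) + β*(a*c) + α*(b*c) ≡ 1 [MOD a*b*c] :=
      (Nat.modEq_and_modEq_iff_modEq_mul cabc).mp ⟨hmab, h1⟩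
    have hT1 : 1 ≤ γ*(a*b) + β*(a*c) + α*(b*c) := by
      have := Nat.mul_le_mul hγ1 hab0
      -- γ*(a*b) ≥ 1
      nlinarith [Nat.mul_le_mul hγ1 (Nat.one_le_iff_ne_zero.mpr (Nat.pos_iff_ne_zero.mp hab0))]
    obtain ⟨k, hk⟩ := (Nat.modEq_iff_dvd' hT1).mp hmabc.symm
    -- bounds
    have bγ : γ*(a*b) + a*b ≤ a*b*c := by
      have := hmul γ c (a*b) (by omega)
      calc γ*(a*b) + a*b ≤ c*(a*b) := this
        _ = a*b*c := by ring
    have bβ : β*(a*c) + a*c ≤ a*b*c := by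
      have := hmul β b (a*c) (by omega)
      calc β*(a*c) + a*c ≤ b*(a*c) := this
        _ = a*b*c := by ring
    have bα : α*(b*c) + b*c ≤ a*b*c := by
      have := hmul α a (b*c) (by omega)
      calc α*(b*c) + b*c ≤ a*(b*c) := this
        _ = a*b*c := by ring
    have hk3 : k < 3 := by
      by_contra h
      push_neg at h
      have : a*b*c*3 ≤ a*b*c*k := Nat.mul_le_mul le_rfl h
      linarith [hk, Nat.sub_le (γ*(a*b) + β*(a*c) + α*(b*c)) 1]
    have hTk : γ*(a*b) + β*(a*c) + α*(b*c) = a*b*c*k + 1 := by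
      have := Nat.sub_add_cancel hT1
      linarith [hk, this]
    interval_cases k
    · -- k = 0 : T = 1, impossible
      have h1' : 1 ≤ γ*(a*b) := Nat.one_le_iff_ne_zero.mpr
        (Nat.mul_ne_zero (by omega) (by omega))
      have h2' : 1 ≤ β*(a*c) := Nat.one_le_iff_ne_zero.mpr
        (Nat.mul_ne_zero (by omega) (by omega))
      have h3' : 1 ≤ α*(b*c) := Nat.one_le_iff_ne_zero.mpr
        (Nat.mul_ne_zero (by omega) (by omega))
      simp at hTk
      linarith
    · -- k = 1 : abc + 1 ∈ S, contradicting hnot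
      exact absurd ⟨γ, β, α, by linarith⟩ hnot
    · linarith
  have keyZ : (γ:ℤ)*(a*b) + β*(a*c) + α*(b*c) = 2*(a*b*c) + 1 := by exact_mod_cast key
  -- twoRep : 2(abc+1) ∈ S
  have twoRep : ∃ U V W : ℕ, 2*(a*b*c+1) = U*(a*b) + V*(a*c) + W*(b*c) := by
    have bb1 : ∀ x y k : ℕ, 2*x + 1 ≤ y → 2*(x*k) + k ≤ y*k := by
      intro x y k h
      calc 2*(x*k) + k = (2*x+1)*k := by ring
        _ ≤ y*k := Nat.mul_le_mul h le_rfl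
    have claim1 : c ≤ 2*γ ∨ b ≤ 2*β := by
      by_contra h
      push_neg at h
      obtain ⟨h1, h2⟩ := h
      have e1 : 2*(γ*(a*b)) + a*b ≤ c*(a*b) := bb1 γ c (a*b) (by omega)
      have e2 : 2*(β*(a*c)) + a*c ≤ b*(a*c) := bb1 β b (a*c) (by omega)
      have e3 : α*(b*c) + b*c ≤ a*(b*c) := hmul α a (b*c) (by omega)
      have r1 : c*(a*b) = a*b*c := by ring
      have r2 : b*(a*c) = a*b*c := by ring
      have r3 : a*(b*c) = a*b*c := by ring
      linarith [key]
    have claim2 : c ≤ 2*γ ∨ a ≤ 2*α := by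
      by_contra h
      push_neg at h
      obtain ⟨h1, h2⟩ := h
      have e1 : 2*(γ*(a*b)) + a*b ≤ c*(a*b) := bb1 γ c (a*b) (by omega)
      have e3 : 2*(α*(b*c)) + b*c ≤ a*(b*c) := bb1 α a (b*c) (by omega)
      have e2 : β*(a*c) + a*c ≤ b*(a*c) := hmul β b (a*c) (by omega)
      have r1 : c*(a*b) = a*b*c := by ring
      have r2 : b*(a*c) = a*b*c := by ring
      have r3 : a*(b*c) = a*b*c := by ring
      linarith [key]
    have claim3 : b ≤ 2*β ∨ a ≤ 2*α := by
      by_contra h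
      push_neg at h
      obtain ⟨h1, h2⟩ := h
      have e2 : 2*(β*(a*c)) + a*c ≤ b*(a*c) := bb1 β b (a*c) (by omega)
      have e3 : 2*(α*(b*c)) + b*c ≤ a*(b*c) := bb1 α a (b*c) (by omega)
      have e1 : γ*(a*b) + a*b ≤ c*(a*b) := hmul γ c (a*b) (by omega)
      have r1 : c*(a*b) = a*b*c := by ring
      have r2 : b*(a*c) = a*b*c := by ring
      have r3 : a*(b*c) = a*b*c := by ring
      linarith [key]
    rcases claim1 with h1 | h1
    · rcases claim2 with h2 | h2
      · -- c ≤ 2γ twice; use c ≤ 2γ together with claim3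
        rcases claim3 with h3 | h3
        · refine ⟨2*γ - c, 2*β - b, 2*α, ?_⟩
          have hd : 2*γ = c + (2*γ - c) := by omega
          have he : 2*β = b + (2*β - b) := by omega
          zify
          have hdZ : (2:ℤ)*γ = c + (2*γ - c : ℕ) := by exact_mod_cast hd
          have heZ : (2:ℤ)*β = b + (2*β - b : ℕ) := by exact_mod_cast he
          linear_combination (-2)*keyZ + (a*b:ℤ)*hdZ + (a*c:ℤ)*heZ
        · refine ⟨2*γ - c, 2*β, 2*α - a, ?_⟩
          have hd : 2*γ = c + (2*γ - c) := by omega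
          have he : 2*α = a + (2*α - a) := by omega
          zify
          have hdZ : (2:ℤ)*γ = c + (2*γ - c : ℕ) := by exact_mod_cast hd
          have heZ : (2:ℤ)*α = a + (2*α - a : ℕ) := by exact_mod_cast he
          linear_combination (-2)*keyZ + (a*b:ℤ)*hdZ + (b*c:ℤ)*heZ
      · refine ⟨2*γ - c, 2*β, 2*α - a, ?_⟩
        have hd : 2*γ = c + (2*γ - c) := by omega
        have he : 2*α = a + (2*α - a) := by omega
        zify
        have hdZ : (2:ℤ)*γ = c + (2*γ - c : ℕ) := by exact_mod_cast hd
        have heZ : (2:ℤ)*α = a + (2*α - a : ℕ) := by exact_mod_cast he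
        linear_combination (-2)*keyZ + (a*b:ℤ)*hdZ + (b*c:ℤ)*heZ
    · rcases claim2 with h2 | h2
      · refine ⟨2*γ - c, 2*β - b, 2*α, ?_⟩
        have hd : 2*γ = c + (2*γ - c) := by omega
        have he : 2*β = b + (2*β - b) := by omega
        zify
        have hdZ : (2:ℤ)*γ = c + (2*γ - c : ℕ) := by exact_mod_cast hd
        have heZ : (2:ℤ)*β = b + (2*β - b : ℕ) := by exact_mod_cast he
        linear_combination (-2)*keyZ + (a*b:ℤ)*hdZ + (a*c:ℤ)*heZ
      · refine ⟨2*γ, 2*β - b, 2*α - a, ?_⟩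
        have hd : 2*β = b + (2*β - b) := by omega
        have he : 2*α = a + (2*α - a) := by omega
        zify
        have hdZ : (2:ℤ)*β = b + (2*β - b : ℕ) := by exact_mod_cast hd
        have heZ : (2:ℤ)*α = a + (2*α - a : ℕ) := by exact_mod_cast he
        linear_combination (-2)*keyZ + (a*c:ℤ)*hdZ + (b*c:ℤ)*heZ
  -- elements of the box are not in S
  have notS : ∀ u v w : ℕ, γ + u < c → β + v < b → α + w < a →
      ¬ ∃ U V W : ℕ, (a*b*c+1) + u*(a*b) + v*(a*c) + w*(b*c)
        = U*(a*b) + V*(a*c) + W*(b*c) := by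
    intro u v w hu hv hw ⟨U, V, W, hrep⟩
    have hn : ((a*b*c+1) + u*(a*b) + v*(a*c) + w*(b*c)) + a*b*c
        = (γ+u)*(a*b) + (β+v)*(a*c) + (α+w)*(b*c) := by
      zify; linear_combination (-1)*keyZ
    -- mod c comparison
    have geU : γ + u ≤ U := by
      have m1 : ((a*b*c+1) + u*(a*b) + v*(a*c) + w*(b*c)) ≡ U*(a*b) [MOD c] := by
        rw [hrep]; exact resC a b c U V W
      have m2 : ((a*b*c+1) + u*(a*b) + v*(a*c) + w*(b*c)) + a*b*c
          ≡ (γ+u)*(a*b) [MOD c] := by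
        rw [hn]; exact resC a b c (γ+u) (β+v) (α+w)
      have m3 : ((a*b*c+1) + u*(a*b) + v*(a*c) + w*(b*c)) + a*b*c
          ≡ ((a*b*c+1) + u*(a*b) + v*(a*c) + w*(b*c)) [MOD c] :=
        Nat.add_mul_mod_self_right _ _ _
      have mcan : (γ+u)*(a*b) ≡ U*(a*b) [MOD c] := m2.symm.trans (m3.trans m1)
      have := Nat.ModEq.cancel_right_of_coprime (c := a*b) cabc.symm mcan
      have e1 : (γ+u) % c = γ+u := Nat.mod_eq_of_lt hu
      have e2 : U % c ≤ U := Nat.mod_le U c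
      unfold Nat.ModEq at this
      omega
    have geV : β + v ≤ V := by
      have m1 : ((a*b*c+1) + u*(a*b) + v*(a*c) + w*(b*c)) ≡ V*(a*c) [MOD b] := by
        rw [hrep]; exact resB a b c U V W
      have m2 : ((a*b*c+1) + u*(a*b) + v*(a*c) + w*(b*c)) + a*b*c
          ≡ (β+v)*(a*c) [MOD b] := by
        rw [hn]; exact resB a b c (γ+u) (β+v) (α+w)
      have m3 : ((a*b*c+1) + u*(a*b) + v*(a*c) + w*(b*c)) + a*b*c
          ≡ ((a*b*c+1) + u*(a*b) + v*(a*c) + w*(b*c)) [MOD b] := by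
        have h : ((a*b*c+1) + u*(a*b) + v*(a*c) + w*(b*c)) + a*b*c
            = ((a*b*c+1) + u*(a*b) + v*(a*c) + w*(b*c)) + (a*c)*b := by ring
        rw [h]; exact Nat.add_mul_mod_self_right _ _ _
      have mcan : (β+v)*(a*c) ≡ V*(a*c) [MOD b] := m2.symm.trans (m3.trans m1)
      have := Nat.ModEq.cancel_right_of_coprime (c := a*c) cacb.symm mcan
      have e1 : (β+v) % b = β+v := Nat.mod_eq_of_lt hv
      have e2 : V % b ≤ V := Nat.mod_le V b
      unfold Nat.ModEq at this
      omega
    have geW : α + w ≤ W := by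
      have m1 : ((a*b*c+1) + u*(a*b) + v*(a*c) + w*(b*c)) ≡ W*(b*c) [MOD a] := by
        rw [hrep]; exact resA a b c U V W
      have m2 : ((a*b*c+1) + u*(a*b) + v*(a*c) + w*(b*c)) + a*b*c
          ≡ (α+w)*(b*c) [MOD a] := by
        rw [hn]; exact resA a b c (γ+u) (β+v) (α+w)
      have m3 : ((a*b*c+1) + u*(a*b) + v*(a*c) + w*(b*c)) + a*b*c
          ≡ ((a*b*c+1) + u*(a*b) + v*(a*c) + w*(b*c)) [MOD a] := by
        have h : ((a*b*c+1) + u*(a*b) + v*(a*c) + w*(b*c)) + a*b*c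
            = ((a*b*c+1) + u*(a*b) + v*(a*c) + w*(b*c)) + (b*c)*a := by ring
        rw [h]; exact Nat.add_mul_mod_self_right _ _ _
      have mcan : (α+w)*(b*c) ≡ W*(b*c) [MOD a] := m2.symm.trans (m3.trans m1)
      have := Nat.ModEq.cancel_right_of_coprime (c := b*c) cbca.symm mcan
      have e1 : (α+w) % a = α+w := Nat.mod_eq_of_lt hw
      have e2 : W % a ≤ W := Nat.mod_le W a
      unfold Nat.ModEq at this
      omega
    have b1 : (γ+u)*(a*b) ≤ U*(a*b) := Nat.mul_le_mul geU le_rfl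
    have b2 : (β+v)*(a*c) ≤ V*(a*c) := Nat.mul_le_mul geV le_rfl
    have b3 : (α+w)*(b*c) ≤ W*(b*c) := Nat.mul_le_mul geW le_rfl
    linarith [hn, hrep]
  -- reduction of S'-representations
  have reduce : ∀ s u v w : ℕ,
      (∃ U V W : ℕ, s*(a*b*c+1) + u*(a*b) + v*(a*c) + w*(b*c)
          = U*(a*b) + V*(a*c) + W*(b*c)) ∨
      (∃ u' v' w' : ℕ, s*(a*b*c+1) + u*(a*b) + v*(a*c) + w*(b*c)
          = (a*b*c+1) + u'*(a*b) + v'*(a*c) + w'*(b*c)) := by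
    intro s
    induction s using Nat.twoStepInduction with
    | zero => intro u v w; exact Or.inl ⟨u, v, w, by ring⟩
    | one => intro u v w; exact Or.inr ⟨u, v, w, by ring⟩
    | more s ih _ =>
      intro u v w
      obtain ⟨U, V, W, h2⟩ := twoRep
      rcases ih (u+U) (v+V) (w+W) with ⟨U', V', W', h⟩ | ⟨u', v', w', h⟩
      · left
        refine ⟨U', V', W', ?_⟩
        zify at h h2 ⊢
        linear_combination h + h2
      · right
        refine ⟨u', v', w', ?_⟩
        zify at h h2 ⊢
        linear_combination h + h2
  -- from n ∉ S and n = (abc+1)+..., the coefficients are in the box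
  have shrink : ∀ u v w : ℕ,
      (¬ ∃ U V W : ℕ, (a*b*c+1) + u*(a*b) + v*(a*c) + w*(b*c)
          = U*(a*b) + V*(a*c) + W*(b*c)) →
      γ + u < c ∧ β + v < b ∧ α + w < a := by
    intro u v w hns
    refine ⟨?_, ?_, ?_⟩
    · by_contra h
      push_neg at h
      have hd : u + γ = c + (u - (c - γ)) := by omega
      apply hns
      refine ⟨u - (c - γ), β + v, α + w, ?_⟩
      zify
      have hdZ : (u:ℤ) + γ = c + ((u - (c - γ) : ℕ) : ℤ) := by exact_mod_cast hd
      linear_combination (-1)*keyZ + (a*b:ℤ)*hdZ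
    · by_contra h
      push_neg at h
      have hd : v + β = b + (v - (b - β)) := by omega
      apply hns
      refine ⟨γ + u, v - (b - β), α + w, ?_⟩
      zify
      have hdZ : (v:ℤ) + β = b + ((v - (b - β) : ℕ) : ℤ) := by exact_mod_cast hd
      linear_combination (-1)*keyZ + (a*c:ℤ)*hdZ
    · by_contra h
      push_neg at h
      have hd : w + α = a + (w - (a - α)) := by omega
      apply hns
      refine ⟨γ + u, β + v, w - (a - α), ?_⟩
      zify
      have hdZ : (w:ℤ) + α = a + ((w - (a - α) : ℕ) : ℤ) := by exact_mod_cast hd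
      linear_combination (-1)*keyZ + (b*c:ℤ)*hdZ
  -- every n ≥ 3abc is in S
  have bigmem : ∀ n : ℕ, 3*(a*b*c) ≤ n →
      ∃ U V W : ℕ, n = U*(a*b) + V*(a*c) + W*(b*c) := by
    intro n hn
    set z := (γ*n) % c with hz
    set y := (β*n) % b with hy
    set x := (α*n) % a with hx
    have mzc : z*(a*b) ≡ n [MOD c] := by
      have h1 : z ≡ γ*n [MOD c] := Nat.mod_modEq (γ*n) c
      have h2 : z*(a*b) ≡ (γ*n)*(a*b) [MOD c] := h1.mul_right _
      have h3 : (γ*n)*(a*b) = n*(γ*(a*b)) := by ring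
      have h4 : n*(γ*(a*b)) ≡ n*1 [MOD c] := hmγ.mul_left n
      calc z*(a*b) ≡ (γ*n)*(a*b) [MOD c] := h2
        _ = n*(γ*(a*b)) := h3
        _ ≡ n*1 [MOD c] := h4
        _ = n := by ring
    have myb : y*(a*c) ≡ n [MOD b] := by
      have h1 : y ≡ β*n [MOD b] := Nat.mod_modEq (β*n) b
      have h2 : y*(a*c) ≡ (β*n)*(a*c) [MOD b] := h1.mul_right _
      have h3 : (β*n)*(a*c) = n*(β*(a*c)) := by ring
      have h4 : n*(β*(a*c)) ≡ n*1 [MOD b] := hmβ.mul_left n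
      calc y*(a*c) ≡ (β*n)*(a*c) [MOD b] := h2
        _ = n*(β*(a*c)) := h3
        _ ≡ n*1 [MOD b] := h4
        _ = n := by ring
    have mxa : x*(b*c) ≡ n [MOD a] := by
      have h1 : x ≡ α*n [MOD a] := Nat.mod_modEq (α*n) a
      have h2 : x*(b*c) ≡ (α*n)*(b*c) [MOD a] := h1.mul_right _
      have h3 : (α*n)*(b*c) = n*(α*(b*c)) := by ring
      have h4 : n*(α*(b*c)) ≡ n*1 [MOD a] := hmα.mul_left n
      calc x*(b*c) ≡ (α*n)*(b*c) [MOD a] := h2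
        _ = n*(α*(b*c)) := h3
        _ ≡ n*1 [MOD a] := h4
        _ = n := by ring
    have mc : z*(a*b) + y*(a*c) + x*(b*c) ≡ n [MOD c] :=
      (resC a b c z y x).trans mzc
    have mb : z*(a*b) + y*(a*c) + x*(b*c) ≡ n [MOD b] :=
      (resB a b c z y x).trans myb
    have ma : z*(a*b) + y*(a*c) + x*(b*c) ≡ n [MOD a] :=
      (resA a b c z y x).trans mxa
    have mab : z*(a*b) + y*(a*c) + x*(b*c) ≡ n [MOD a*b] :=
      (Nat.modEq_and_modEq_iff_modEq_mul cab).mp ⟨ma, mb⟩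
    have mabc : z*(a*b) + y*(a*c) + x*(b*c) ≡ n [MOD a*b*c] :=
      (Nat.modEq_and_modEq_iff_modEq_mul cabc).mp ⟨mab, mc⟩
    have hzc : z < c := Nat.mod_lt _ hc0
    have hyb : y < b := Nat.mod_lt _ hb0
    have hxa : x < a := Nat.mod_lt _ ha0
    have bz : z*(a*b) + a*b ≤ a*b*c := by
      have := hmul z c (a*b) (by omega)
      calc z*(a*b) + a*b ≤ c*(a*b) := this
        _ = a*b*c := by ring
    have by' : y*(a*c) + a*c ≤ a*b*c := by
      have := hmul y b (a*c) (by omega)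
      calc y*(a*c) + a*c ≤ b*(a*c) := this
        _ = a*b*c := by ring
    have bx : x*(b*c) + b*c ≤ a*b*c := by
      have := hmul x a (b*c) (by omega)
      calc x*(b*c) + b*c ≤ a*(b*c) := this
        _ = a*b*c := by ring
    have hmn : z*(a*b) + y*(a*c) + x*(b*c) ≤ n := by linarith
    obtain ⟨t, ht⟩ := (Nat.modEq_iff_dvd' hmn).mp mabc
    have hn' : n = z*(a*b) + y*(a*c) + x*(b*c) + a*b*c*t := by
      have := Nat.sub_add_cancel hmn
      linarith [ht]
    refine ⟨z, y + t*b, x, ?_⟩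
    zify
    have hnZ : (n:ℤ) = z*(a*b) + y*(a*c) + x*(b*c) + a*b*c*t := by exact_mod_cast hn'
    linear_combination hnZ
  -- the finite box of extra gaps
  set D : Finset ℕ :=
    (Finset.range (c-γ) ×ˢ Finset.range (b-β) ×ˢ Finset.range (a-α)).image
      (fun p => (a*b*c+1) + p.1*(a*b) + p.2.1*(a*c) + p.2.2*(b*c)) with hD
  -- injectivity / cardinality
  have hcard : D.card = (a - α) * (b - β) * (c - γ) := by
    rw [hD, Finset.card_image_of_injOn, Finset.card_product, Finset.card_product,
      Finset.card_range, Finset.card_range, Finset.card_range]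
    · ring
    · rintro ⟨p1, p2, p3⟩ hp ⟨q1, q2, q3⟩ hq e
      simp only [Finset.coe_product, Set.mem_prod, Finset.mem_coe, Finset.mem_range] at hp hq
      obtain ⟨hp1, hp2, hp3⟩ := hp
      obtain ⟨hq1, hq2, hq3⟩ := hq
      simp only at e
      have e' : (γ+p1)*(a*b) + (β+p2)*(a*c) + (α+p3)*(b*c)
          = (γ+q1)*(a*b) + (β+q2)*(a*c) + (α+q3)*(b*c) := by
        zify
        have eZ : ((a:ℤ)*b*c+1) + p1*(a*b) + p2*(a*c) + p3*(b*c)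
            = ((a:ℤ)*b*c+1) + q1*(a*b) + q2*(a*c) + q3*(b*c) := by exact_mod_cast e
        linear_combination eZ
      have m1 : (γ+p1)*(a*b) ≡ (γ+q1)*(a*b) [MOD c] := by
        calc (γ+p1)*(a*b) ≡ (γ+p1)*(a*b) + (β+p2)*(a*c) + (α+p3)*(b*c) [MOD c] :=
              (resC a b c (γ+p1) (β+p2) (α+p3)).symm
          _ = (γ+q1)*(a*b) + (β+q2)*(a*c) + (α+q3)*(b*c) := e'
          _ ≡ (γ+q1)*(a*b) [MOD c] := resC a b c (γ+q1) (β+q2) (α+q3)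
      have m2 : (β+p2)*(a*c) ≡ (β+q2)*(a*c) [MOD b] := by
        calc (β+p2)*(a*c) ≡ (γ+p1)*(a*b) + (β+p2)*(a*c) + (α+p3)*(b*c) [MOD b] :=
              (resB a b c (γ+p1) (β+p2) (α+p3)).symm
          _ = (γ+q1)*(a*b) + (β+q2)*(a*c) + (α+q3)*(b*c) := e'
          _ ≡ (β+q2)*(a*c) [MOD b] := resB a b c (γ+q1) (β+q2) (α+q3)
      have m3 : (α+p3)*(b*c) ≡ (α+q3)*(b*c) [MOD a] := by
        calc (α+p3)*(b*c) ≡ (γ+p1)*(a*b) + (β+p2)*(a*c) + (α+p3)*(b*c) [MOD a] :=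
              (resA a b c (γ+p1) (β+p2) (α+p3)).symm
          _ = (γ+q1)*(a*b) + (β+q2)*(a*c) + (α+q3)*(b*c) := e'
          _ ≡ (α+q3)*(b*c) [MOD a] := resA a b c (γ+q1) (β+q2) (α+q3)
      have c1 := Nat.ModEq.cancel_right_of_coprime (c := a*b) cabc.symm m1
      have c2 := Nat.ModEq.cancel_right_of_coprime (c := a*c) cacb.symm m2
      have c3 := Nat.ModEq.cancel_right_of_coprime (c := b*c) cbca.symm m3
      unfold Nat.ModEq at c1 c2 c3
      rw [Nat.mod_eq_of_lt (by omega), Nat.mod_eq_of_lt (by omega)] at c1 c2 c3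
      simp only [Prod.mk.injEq]
      omega
  -- D members are gaps of S
  have hDgaps : ∀ n ∈ D, ¬ ∃ u v w : ℕ, n = u*(a*b) + v*(a*c) + w*(b*c) := by
    intro n hn
    rw [hD, Finset.mem_image] at hn
    obtain ⟨⟨p1, p2, p3⟩, hp, hfp⟩ := hn
    simp only [Finset.mem_product, Finset.mem_range] at hp
    obtain ⟨hp1, hp2, hp3⟩ := hp
    rintro ⟨u, v, w, hrep⟩
    exact notS p1 p2 p3 (by omega) (by omega) (by omega)
      ⟨u, v, w, by rw [← hfp] at hrep; simpa using hrep.symm ▸ rfl⟩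
  -- union decomposition
  have hunion : {n : ℕ | ¬ ∃ u v w : ℕ, n = u*(a*b) + v*(a*c) + w*(b*c)}
      = {n : ℕ | ¬ ∃ u v w s : ℕ,
          n = u*(a*b) + v*(a*c) + w*(b*c) + s*(a*b*c+1)} ∪ ↑D := by
    ext n
    simp only [Set.mem_union, Set.mem_setOf_eq, Finset.mem_coe]
    constructor
    · intro hn
      by_cases h' : ∃ u v w s : ℕ, n = u*(a*b) + v*(a*c) + w*(b*c) + s*(a*b*c+1)
      · right
        obtain ⟨u, v, w, s, hs⟩ := h'
        rcases reduce s u v w with ⟨U, V, W, h⟩ | ⟨u', v', w', h⟩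
        · exact absurd ⟨U, V, W, by rw [hs]; linarith⟩ hn
        · have hrep : n = (a*b*c+1) + u'*(a*b) + v'*(a*c) + w'*(b*c) := by
            rw [hs]; linarith
          have hb' : γ + u' < c ∧ β + v' < b ∧ α + w' < a := by
            apply shrink
            rintro ⟨U, V, W, hUVW⟩
            exact hn ⟨U, V, W, by rw [hrep]; linarith⟩
          rw [hD, Finset.mem_image]
          refine ⟨(u', v', w'), ?_, hrep.symm⟩
          simp only [Finset.mem_product, Finset.mem_range]
          omega
      · exact Or.inl h'
    · rintro (h | h)
      · rintro ⟨u, v, w, hc'⟩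
        exact h ⟨u, v, w, 0, by rw [hc']; ring⟩
      · exact hDgaps n h
  -- disjointness
  have hdisj : Disjoint {n : ℕ | ¬ ∃ u v w s : ℕ,
      n = u*(a*b) + v*(a*c) + w*(b*c) + s*(a*b*c+1)} (↑D : Set ℕ) := by
    rw [Set.disjoint_left]
    intro n hN hDn
    simp only [Set.mem_setOf_eq] at hN
    rw [Finset.mem_coe, hD, Finset.mem_image] at hDn
    obtain ⟨⟨p1, p2, p3⟩, _, hfp⟩ := hDn
    exact hN ⟨p1, p2, p3, 1, by rw [← hfp]; ring⟩
  -- finiteness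
  have hMfin : {n : ℕ | ¬ ∃ u v w : ℕ, n = u*(a*b) + v*(a*c) + w*(b*c)}.Finite := by
    apply Set.Finite.subset (Set.finite_Iio (3*(a*b*c)))
    intro n hn
    simp only [Set.mem_setOf_eq] at hn
    simp only [Set.mem_Iio]
    by_contra h
    push_neg at h
    exact hn (bigmem n h)
  have hNfin : {n : ℕ | ¬ ∃ u v w s : ℕ,
      n = u*(a*b) + v*(a*c) + w*(b*c) + s*(a*b*c+1)}.Finite := by
    apply hMfin.subset
    intro n hn
    simp only [Set.mem_setOf_eq] at hn ⊢
    rintro ⟨u, v, w, hc'⟩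
    exact hn ⟨u, v, w, 0, by rw [hc']; ring⟩
  rw [hunion, Set.ncard_union_eq hdisj hNfin (D.finite_toSet), Set.ncard_coe_finset, hcard]
end

section
/- Let a, b, c be pairwise relatively prime integers with 2 ≤ a < b < c, let S = ⟨ab, ac, bc⟩, suppose abc + 1 ∉ S, and let S' = ⟨ab, ac, bc, abc+1⟩. With α, β, γ as the standard inverses (γ·ab ≡ 1 mod c with 1 ≤ γ ≤ c−1, β·ac ≡ 1 mod b with 1 ≤ β ≤ b−1, α·bc ≡ 1 mod a with 1 ≤ α ≤ a−1), the Frobenius number of S' equals max{(γ−1)ab + (b−1)ac − bc, (c−1)ab + (β−1)ac − bc, (c−1)ab + (b−1)ac + (α−a−1)bc}. -/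
set_option maxHeartbeats 1000000

lemma frob_notS (a b c : ℤ) (ha : 0 < a) (hb : 0 < b) (hc : 0 < c)
    (cab : IsCoprime a b) (cac : IsCoprime a c) (cbc : IsCoprime b c)
    (x y z k : ℤ) (hx0 : 0 ≤ x) (hxc : x < c) (hy0 : 0 ≤ y) (hyb : y < b)
    (hz0 : 0 ≤ z) (hza : z < a) (hk : 1 ≤ k) (u v w : ℕ)
    (h : (u:ℤ) * (a*b) + v * (a*c) + w * (b*c) = x*(a*b) + y*(a*c) + z*(b*c) - k*(a*b*c)) :
    False := by
  have habc : (0:ℤ) < a*b*c := by positivity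
  have hu0 : (0:ℤ) ≤ u := Int.natCast_nonneg u
  have hv0 : (0:ℤ) ≤ v := Int.natCast_nonneg v
  have hw0 : (0:ℤ) ≤ w := Int.natCast_nonneg w
  have h1 : c ∣ ((u:ℤ) - x) := by
    have hcop : IsCoprime c (a*b) := cac.symm.mul_right cbc.symm
    refine hcop.dvd_of_dvd_mul_right ⟨-(((v:ℤ)-y)*a) - ((w:ℤ)-z)*b - k*(a*b), ?_⟩
    linear_combination h
  have h2 : b ∣ ((v:ℤ) - y) := by
    have hcop : IsCoprime b (a*c) := cab.symm.mul_right cbc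
    refine hcop.dvd_of_dvd_mul_right ⟨-(((u:ℤ)-x)*a) - ((w:ℤ)-z)*c - k*(a*c), ?_⟩
    linear_combination h
  have h3 : a ∣ ((w:ℤ) - z) := by
    have hcop : IsCoprime a (b*c) := cab.mul_right cac
    refine hcop.dvd_of_dvd_mul_right ⟨-(((u:ℤ)-x)*b) - ((v:ℤ)-y)*c - k*(b*c), ?_⟩
    linear_combination h
  have hux : x ≤ (u:ℤ) := by
    obtain ⟨d, hd⟩ := h1
    have hd1 : -1 < d := by nlinarith
    have hd0 : 0 ≤ d := by linarith
    nlinarith [mul_nonneg hc.le hd0]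
  have hvy : y ≤ (v:ℤ) := by
    obtain ⟨d, hd⟩ := h2
    have hd1 : -1 < d := by nlinarith
    have hd0 : 0 ≤ d := by linarith
    nlinarith [mul_nonneg hb.le hd0]
  have hwz : z ≤ (w:ℤ) := by
    obtain ⟨d, hd⟩ := h3
    have hd1 : -1 < d := by nlinarith
    have hd0 : 0 ≤ d := by linarith
    nlinarith [mul_nonneg ha.le hd0]
  nlinarith [mul_le_mul_of_nonneg_right hux (mul_pos ha hb).le,
    mul_le_mul_of_nonneg_right hvy (mul_pos ha hc).le,
    mul_le_mul_of_nonneg_right hwz (mul_pos hb hc).le,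
    mul_le_mul_of_nonneg_right hk habc.le]

lemma frob_notmem (a b c : ℤ) (ha : 0 < a) (hb : 0 < b) (hc : 0 < c)
    (cab : IsCoprime a b) (cac : IsCoprime a c) (cbc : IsCoprime b c)
    (x y z x' y' z' m : ℤ)
    (hx0 : 0 ≤ x) (hxc : x < c) (hy0 : 0 ≤ y) (hyb : y < b) (hz0 : 0 ≤ z) (hza : z < a)
    (hx0' : 0 ≤ x') (hxc' : x' < c) (hy0' : 0 ≤ y') (hyb' : y' < b) (hz0' : 0 ≤ z') (hza' : z' < a)
    (hm : m = x*(a*b) + y*(a*c) + z*(b*c) - a*b*c)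
    (hm' : m - (a*b*c + 1) = x'*(a*b) + y'*(a*c) + z'*(b*c) - a*b*c)
    (hub : m < 2*(a*b*c + 1)) :
    ¬ ∃ u v w s : ℕ, m = u * (a*b) + v * (a*c) + w * (b*c) + s * (a*b*c + 1) := by
  rintro ⟨u, v, w, s, h⟩
  have habc : (0:ℤ) < a*b*c := by positivity
  match s with
  | 0 =>
    refine frob_notS a b c ha hb hc cab cac cbc x y z 1 hx0 hxc hy0 hyb hz0 hza le_rfl u v w ?_
    push_cast at h
    linear_combination hm - h
  | 1 =>
    refine frob_notS a b c ha hb hc cab cac cbc x' y' z' 1 hx0' hxc' hy0' hyb' hz0' hza' le_rfl u v w ?_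
    push_cast at h
    linear_combination hm' - h
  | (s+2) =>
    push_cast at h
    have hu0 : (0:ℤ) ≤ u := Int.natCast_nonneg u
    have hv0 : (0:ℤ) ≤ v := Int.natCast_nonneg v
    have hw0 : (0:ℤ) ≤ w := Int.natCast_nonneg w
    have hs0 : (0:ℤ) ≤ s := Int.natCast_nonneg s
    nlinarith [mul_nonneg hu0 (mul_pos ha hb).le, mul_nonneg hv0 (mul_pos ha hc).le,
      mul_nonneg hw0 (mul_pos hb hc).le, mul_nonneg hs0 (by positivity : (0:ℤ) ≤ a*b*c+1)]

theorem frobenius_Sprime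
    (a b c α β γ : ℤ) (ha : 2 ≤ a) (hab : a < b) (hbc : b < c)
    (cab : IsCoprime a b) (cac : IsCoprime a c) (cbc : IsCoprime b c)
    (hγ : 1 ≤ γ ∧ γ ≤ c - 1 ∧ (γ * (a * b)) % c = 1 % c)
    (hβ : 1 ≤ β ∧ β ≤ b - 1 ∧ (β * (a * c)) % b = 1 % b)
    (hα : 1 ≤ α ∧ α ≤ a - 1 ∧ (α * (b * c)) % a = 1 % a)
    (hnot : ¬ ∃ u v w : ℕ, a * b * c + 1 = u * (a * b) + v * (a * c) + w * (b * c)) :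
    IsGreatest {n : ℤ | ¬ ∃ u v w s : ℕ,
        n = u * (a * b) + v * (a * c) + w * (b * c) + s * (a * b * c + 1)}
      (max (max ((γ - 1) * (a * b) + (b - 1) * (a * c) - b * c)
               ((c - 1) * (a * b) + (β - 1) * (a * c) - b * c))
           ((c - 1) * (a * b) + (b - 1) * (a * c) + (α - a - 1) * (b * c))) := by
  obtain ⟨hγ1, hγ2, hγ3⟩ := hγ
  obtain ⟨hβ1, hβ2, hβ3⟩ := hβ
  obtain ⟨hα1, hα2, hα3⟩ := hα
  have ha0 : (0:ℤ) < a := by linarith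
  have hb0 : (0:ℤ) < b := by linarith
  have hc0 : (0:ℤ) < c := by linarith
  have habc : (0:ℤ) < a*b*c := by positivity
  have hmabc : (0:ℤ) < a*b := by positivity
  have hmacc : (0:ℤ) < a*c := by positivity
  have hmbcc : (0:ℤ) < b*c := by positivity
  -- the key identity
  have hσ : γ*(a*b) + β*(a*c) + α*(b*c) = 2*(a*b*c) + 1 := by
    have dc : c ∣ (γ*(a*b) + β*(a*c) + α*(b*c)) - 1 := by
      have hmod : Int.ModEq c (γ*(a*b)) 1 := hγ3
      obtain ⟨e, he⟩ := hmod.dvd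
      exact ⟨-e + β*a + α*b, by linear_combination -he⟩
    have db : b ∣ (γ*(a*b) + β*(a*c) + α*(b*c)) - 1 := by
      have hmod : Int.ModEq b (β*(a*c)) 1 := hβ3
      obtain ⟨e, he⟩ := hmod.dvd
      exact ⟨-e + γ*a + α*c, by linear_combination -he⟩
    have da : a ∣ (γ*(a*b) + β*(a*c) + α*(b*c)) - 1 := by
      have hmod : Int.ModEq a (α*(b*c)) 1 := hα3
      obtain ⟨e, he⟩ := hmod.dvd
      exact ⟨-e + γ*b + β*c, by linear_combination -he⟩
    have dab : a*b ∣ (γ*(a*b) + β*(a*c) + α*(b*c)) - 1 := cab.mul_dvd da db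
    have dabc : a*b*c ∣ (γ*(a*b) + β*(a*c) + α*(b*c)) - 1 :=
      (cac.mul_left cbc).mul_dvd dab dc
    obtain ⟨t, ht⟩ := dabc
    have hlb : 0 < (γ*(a*b) + β*(a*c) + α*(b*c)) - 1 := by
      nlinarith [mul_le_mul_of_nonneg_right hγ1 hmabc.le,
        mul_le_mul_of_nonneg_right hβ1 hmacc.le,
        mul_le_mul_of_nonneg_right hα1 hmbcc.le]
    have hubσ : (γ*(a*b) + β*(a*c) + α*(b*c)) - 1 < 3*(a*b*c) := by
      nlinarith [mul_nonneg (by linarith : (0:ℤ) ≤ c-1-γ) hmabc.le,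
        mul_nonneg (by linarith : (0:ℤ) ≤ b-1-β) hmacc.le,
        mul_nonneg (by linarith : (0:ℤ) ≤ a-1-α) hmbcc.le]
    have ht1 : 0 < t := by
      by_contra hcon
      push_neg at hcon
      nlinarith [mul_nonpos_of_nonneg_of_nonpos habc.le hcon]
    have ht2 : t < 3 := by
      by_contra hcon
      push_neg at hcon
      nlinarith [mul_le_mul_of_nonneg_left hcon habc.le]
    interval_cases t
    · exfalso
      refine hnot ⟨γ.toNat, β.toNat, α.toNat, ?_⟩
      push_cast [Int.toNat_of_nonneg (by linarith : (0:ℤ) ≤ γ),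
        Int.toNat_of_nonneg (by linarith : (0:ℤ) ≤ β),
        Int.toNat_of_nonneg (by linarith : (0:ℤ) ≤ α)]
      linarith [ht]
    · linarith [ht]
  constructor
  · -- the max is not representable
    simp only [Set.mem_setOf_eq]
    have key : ∀ x y z x' y' z' m : ℤ, 0 ≤ x → x < c → 0 ≤ y → y < b → 0 ≤ z → z < a →
        0 ≤ x' → x' < c → 0 ≤ y' → y' < b → 0 ≤ z' → z' < a →
        m = x*(a*b) + y*(a*c) + z*(b*c) - a*b*c →
        m - (a*b*c + 1) = x'*(a*b) + y'*(a*c) + z'*(b*c) - a*b*c →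
        m < 2*(a*b*c + 1) →
        ¬ ∃ u v w s : ℕ, m = u * (a*b) + v * (a*c) + w * (b*c) + s * (a*b*c + 1) :=
      fun x y z x' y' z' m h1 h2 h3 h4 h5 h6 h7 h8 h9 h10 h11 h12 h13 h14 h15 =>
        frob_notmem a b c ha0 hb0 hc0 cab cac cbc x y z x' y' z' m
          h1 h2 h3 h4 h5 h6 h7 h8 h9 h10 h11 h12 h13 h14 h15
    rcases max_choice (max ((γ - 1) * (a * b) + (b - 1) * (a * c) - b * c)
        ((c - 1) * (a * b) + (β - 1) * (a * c) - b * c))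
        ((c - 1) * (a * b) + (b - 1) * (a * c) + (α - a - 1) * (b * c)) with hM | hM
    · rw [hM]
      rcases max_choice ((γ - 1) * (a * b) + (b - 1) * (a * c) - b * c)
          ((c - 1) * (a * b) + (β - 1) * (a * c) - b * c) with hM2 | hM2
      · rw [hM2]
        refine key (γ-1) (b-1) (a-1) (c-1) (b-1-β) (a-1-α)
          ((γ - 1) * (a * b) + (b - 1) * (a * c) - b * c)
          (by linarith) (by linarith) (by linarith) (by linarith) (by linarith) (by linarith)
          (by linarith) (by linarith) (by linarith) (by linarith) (by linarith) (by linarith)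
          (by ring) (by linear_combination hσ) ?_
        nlinarith [mul_nonneg (by linarith : (0:ℤ) ≤ c-1-γ) hmabc.le]
      · rw [hM2]
        refine key (c-1) (β-1) (a-1) (c-1-γ) (b-1) (a-1-α)
          ((c - 1) * (a * b) + (β - 1) * (a * c) - b * c)
          (by linarith) (by linarith) (by linarith) (by linarith) (by linarith) (by linarith)
          (by linarith) (by linarith) (by linarith) (by linarith) (by linarith) (by linarith)
          (by ring) (by linear_combination hσ) ?_
        nlinarith [mul_nonneg (by linarith : (0:ℤ) ≤ b-1-β) hmacc.le]
    · rw [hM]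
      refine key (c-1) (b-1) (α-1) (c-1-γ) (b-1-β) (a-1)
        ((c - 1) * (a * b) + (b - 1) * (a * c) + (α - a - 1) * (b * c))
        (by linarith) (by linarith) (by linarith) (by linarith) (by linarith) (by linarith)
        (by linarith) (by linarith) (by linarith) (by linarith) (by linarith) (by linarith)
        (by ring) (by linear_combination hσ) ?_
      nlinarith [mul_nonneg (by linarith : (0:ℤ) ≤ a+1-α) hmbcc.le]
  · -- upper bound
    intro n hn
    simp only [Set.mem_setOf_eq] at hn
    by_contra hlt
    push_neg at hlt
    have hM1 : (γ - 1) * (a * b) + (b - 1) * (a * c) - b * c < n := by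
      calc (γ - 1) * (a * b) + (b - 1) * (a * c) - b * c ≤ _ :=
            le_trans (le_max_left _ _) (le_max_left _ _)
        _ < n := hlt
    have hM2 : (c - 1) * (a * b) + (β - 1) * (a * c) - b * c < n := by
      calc (c - 1) * (a * b) + (β - 1) * (a * c) - b * c ≤ _ :=
            le_trans (le_max_right _ _) (le_max_left _ _)
        _ < n := hlt
    have hM3 : (c - 1) * (a * b) + (b - 1) * (a * c) + (α - a - 1) * (b * c) < n := by
      calc (c - 1) * (a * b) + (b - 1) * (a * c) + (α - a - 1) * (b * c) ≤ _ :=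
            le_max_right _ _
        _ < n := hlt
    -- coordinates of n
    set x := (γ * n) % c with hxdef
    set y := (β * n) % b with hydef
    set z := (α * n) % a with hzdef
    have hx0 : 0 ≤ x := Int.emod_nonneg _ hc0.ne'
    have hxc : x < c := Int.emod_lt_of_pos _ hc0
    have hy0 : 0 ≤ y := Int.emod_nonneg _ hb0.ne'
    have hyb : y < b := Int.emod_lt_of_pos _ hb0
    have hz0 : 0 ≤ z := Int.emod_nonneg _ ha0.ne'
    have hza : z < a := Int.emod_lt_of_pos _ ha0
    have dvdc : c ∣ n - x*(a*b) := by
      have hmod : Int.ModEq c (γ*(a*b)) 1 := hγ3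
      obtain ⟨e, he⟩ := hmod.dvd
      have hx : x = γ*n - c*(γ*n/c) := by rw [hxdef, Int.emod_def]
      exact ⟨n*e + (γ*n/c)*(a*b), by linear_combination n*he - (a*b)*hx⟩
    have dvdb : b ∣ n - y*(a*c) := by
      have hmod : Int.ModEq b (β*(a*c)) 1 := hβ3
      obtain ⟨e, he⟩ := hmod.dvd
      have hy : y = β*n - b*(β*n/b) := by rw [hydef, Int.emod_def]
      exact ⟨n*e + (β*n/b)*(a*c), by linear_combination n*he - (a*c)*hy⟩
    have dvda : a ∣ n - z*(b*c) := by
      have hmod : Int.ModEq a (α*(b*c)) 1 := hα3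
      obtain ⟨e, he⟩ := hmod.dvd
      have hz : z = α*n - a*(α*n/a) := by rw [hzdef, Int.emod_def]
      exact ⟨n*e + (α*n/a)*(b*c), by linear_combination n*he - (b*c)*hz⟩
    have dvdA : a ∣ n - (x*(a*b) + y*(a*c) + z*(b*c)) := by
      obtain ⟨e, he⟩ := dvda
      exact ⟨e - x*b - y*c, by linear_combination he⟩
    have dvdB : b ∣ n - (x*(a*b) + y*(a*c) + z*(b*c)) := by
      obtain ⟨e, he⟩ := dvdb
      exact ⟨e - x*a - z*c, by linear_combination he⟩
    have dvdC : c ∣ n - (x*(a*b) + y*(a*c) + z*(b*c)) := by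
      obtain ⟨e, he⟩ := dvdc
      exact ⟨e - y*a - z*b, by linear_combination he⟩
    have dvdAll : a*b*c ∣ n - (x*(a*b) + y*(a*c) + z*(b*c)) :=
      (cac.mul_left cbc).mul_dvd (cab.mul_dvd dvdA dvdB) dvdC
    obtain ⟨t, ht⟩ := dvdAll
    have hcases : 0 ≤ t ∨ t = -1 ∨ t = -2 ∨ t ≤ -3 := by omega
    rcases hcases with htc | htc | htc | htc
    · -- s = 0
      have hxt : (0:ℤ) ≤ x + c*t := add_nonneg hx0 (mul_nonneg hc0.le htc)
      refine hn ⟨(x + c*t).toNat, y.toNat, z.toNat, 0, ?_⟩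
      push_cast [Int.toNat_of_nonneg hxt, Int.toNat_of_nonneg hy0, Int.toNat_of_nonneg hz0]
      linear_combination ht
    · -- s = 1
      subst htc
      have hxγ : γ ≤ x := by
        by_contra hcon
        push_neg at hcon
        have : n ≤ (γ - 1) * (a * b) + (b - 1) * (a * c) - b * c := by
          nlinarith [mul_nonneg (by linarith : (0:ℤ) ≤ γ-1-x) hmabc.le,
            mul_nonneg (by linarith : (0:ℤ) ≤ b-1-y) hmacc.le,
            mul_nonneg (by linarith : (0:ℤ) ≤ a-1-z) hmbcc.le]
        linarith
      have hyβ : β ≤ y := by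
        by_contra hcon
        push_neg at hcon
        have : n ≤ (c - 1) * (a * b) + (β - 1) * (a * c) - b * c := by
          nlinarith [mul_nonneg (by linarith : (0:ℤ) ≤ c-1-x) hmabc.le,
            mul_nonneg (by linarith : (0:ℤ) ≤ β-1-y) hmacc.le,
            mul_nonneg (by linarith : (0:ℤ) ≤ a-1-z) hmbcc.le]
        linarith
      have hzα : α ≤ z := by
        by_contra hcon
        push_neg at hcon
        have : n ≤ (c - 1) * (a * b) + (b - 1) * (a * c) + (α - a - 1) * (b * c) := by
          nlinarith [mul_nonneg (by linarith : (0:ℤ) ≤ c-1-x) hmabc.le,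
            mul_nonneg (by linarith : (0:ℤ) ≤ b-1-y) hmacc.le,
            mul_nonneg (by linarith : (0:ℤ) ≤ α-1-z) hmbcc.le]
        linarith
      refine hn ⟨(x - γ).toNat, (y - β).toNat, (z - α).toNat, 1, ?_⟩
      push_cast [Int.toNat_of_nonneg (by linarith : (0:ℤ) ≤ x - γ),
        Int.toNat_of_nonneg (by linarith : (0:ℤ) ≤ y - β),
        Int.toNat_of_nonneg (by linarith : (0:ℤ) ≤ z - α)]
      linear_combination ht + hσ
    · -- s = 2
      subst htc
      have hxγ : 2*γ ≤ x := by
        by_contra hcon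
        push_neg at hcon
        have : n < (γ - 1) * (a * b) + (b - 1) * (a * c) - b * c := by
          nlinarith [mul_nonneg (by linarith : (0:ℤ) ≤ 2*γ-1-x) hmabc.le,
            mul_nonneg (by linarith : (0:ℤ) ≤ b-1-y) hmacc.le,
            mul_nonneg (by linarith : (0:ℤ) ≤ a-1-z) hmbcc.le,
            mul_nonneg (by linarith : (0:ℤ) ≤ c-1-γ) hmabc.le]
        linarith
      have hyβ : 2*β ≤ y := by
        by_contra hcon
        push_neg at hcon
        have : n < (c - 1) * (a * b) + (β - 1) * (a * c) - b * c := by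
          nlinarith [mul_nonneg (by linarith : (0:ℤ) ≤ c-1-x) hmabc.le,
            mul_nonneg (by linarith : (0:ℤ) ≤ 2*β-1-y) hmacc.le,
            mul_nonneg (by linarith : (0:ℤ) ≤ a-1-z) hmbcc.le,
            mul_nonneg (by linarith : (0:ℤ) ≤ b-1-β) hmacc.le]
        linarith
      have hzα : 2*α ≤ z := by
        by_contra hcon
        push_neg at hcon
        have : n < (c - 1) * (a * b) + (b - 1) * (a * c) + (α - a - 1) * (b * c) := by
          nlinarith [mul_nonneg (by linarith : (0:ℤ) ≤ c-1-x) hmabc.le,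
            mul_nonneg (by linarith : (0:ℤ) ≤ b-1-y) hmacc.le,
            mul_nonneg (by linarith : (0:ℤ) ≤ 2*α-1-z) hmbcc.le,
            mul_nonneg (by linarith : (0:ℤ) ≤ a-1-α) hmbcc.le]
        linarith
      refine hn ⟨(x - 2*γ).toNat, (y - 2*β).toNat, (z - 2*α).toNat, 2, ?_⟩
      push_cast [Int.toNat_of_nonneg (by linarith : (0:ℤ) ≤ x - 2*γ),
        Int.toNat_of_nonneg (by linarith : (0:ℤ) ≤ y - 2*β),
        Int.toNat_of_nonneg (by linarith : (0:ℤ) ≤ z - 2*α)]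
      linear_combination ht + 2*hσ
    · -- t ≤ -3 : impossible
      have hbc1 : (0:ℤ) < b*c - b - c := by nlinarith
      have hpos : (0:ℤ) < a*(b*c - b - c) := mul_pos ha0 hbc1
      nlinarith [mul_nonneg (by linarith : (0:ℤ) ≤ c-1-x) hmabc.le,
        mul_nonneg (by linarith : (0:ℤ) ≤ b-1-y) hmacc.le,
        mul_nonneg (by linarith : (0:ℤ) ≤ a-1-z) hmbcc.le,
        mul_le_mul_of_nonneg_left htc habc.le,
        mul_nonneg (by linarith : (0:ℤ) ≤ α-1) hmbcc.le]
end

section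
/- Let a, b, c be pairwise relatively prime integers with 2 ≤ a < b < c and let S = ⟨ab, ac, bc⟩. Every element s ∈ S with s < abc has a unique factorization, i.e., there is exactly one triple (u, v, w) ∈ ℕ³ with s = u·ab + v·ac + w·bc. -/
theorem unique_factorization_below_abc
    (a b c : ℕ) (ha : 2 ≤ a) (hab : a < b) (hbc : b < c)
    (cab : Nat.Coprime a b) (cac : Nat.Coprime a c) (cbc : Nat.Coprime b c)
    (s : ℕ) (hs : s < a * b * c)
    (hmem : ∃ u v w : ℕ, s = u * (a * b) + v * (a * c) + w * (b * c)) :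
    ∃! t : ℕ × ℕ × ℕ, s = t.1 * (a * b) + t.2.1 * (a * c) + t.2.2 * (b * c) := by
  obtain ⟨u, v, w, huvw⟩ := hmem
  have hbpos : 0 < b := by omega
  have hcpos : 0 < c := by omega
  have key : ∀ x y z x' y' z' : ℕ,
      s = x * (a * b) + y * (a * c) + z * (b * c) →
      s = x' * (a * b) + y' * (a * c) + z' * (b * c) →
      x = x' ∧ y = y' ∧ z = z' := by
    intro x y z x' y' z' h h'
    have heq : x * (a * b) + y * (a * c) + z * (b * c)
        = x' * (a * b) + y' * (a * c) + z' * (b * c) := h.symm.trans h'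
    -- x = x' by working mod c
    have e1 : x * (a * b) + (y * a + z * b) * c
        = x * (a * b) + y * (a * c) + z * (b * c) := by ring
    have e2 : x' * (a * b) + (y' * a + z' * b) * c
        = x' * (a * b) + y' * (a * c) + z' * (b * c) := by ring
    have h1 : x * (a * b) + (y * a + z * b) * c
        = x' * (a * b) + (y' * a + z' * b) * c := by rw [e1, e2]; exact heq
    have hmodc : (x * (a * b)) % c = (x' * (a * b)) % c := by
      have := congrArg (· % c) h1
      simpa [Nat.add_mul_mod_self_right] using this
    have hcopc : Nat.Coprime (a * b) c := Nat.Coprime.mul cac cbc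
    have hxx : x ≡ x' [MOD c] := Nat.ModEq.cancel_right_of_coprime hcopc.symm hmodc
    have hxc : x < c := by
      have hx1 : x * (a * b) < c * (a * b) := by
        have : x * (a * b) ≤ s := by omega
        have hsc : s < c * (a * b) := by
          calc s < a * b * c := hs
          _ = c * (a * b) := by ring
        omega
      exact Nat.lt_of_mul_lt_mul_right hx1
    have hxc' : x' < c := by
      have hx1 : x' * (a * b) < c * (a * b) := by
        have : x' * (a * b) ≤ s := by omega
        have hsc : s < c * (a * b) := by
          calc s < a * b * c := hs
          _ = c * (a * b) := by ring
        omega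
      exact Nat.lt_of_mul_lt_mul_right hx1
    have hx : x = x' := Nat.ModEq.eq_of_lt_of_lt hxx hxc hxc'
    -- y = y' by working mod b
    have f1 : y * (a * c) + (x * a + z * c) * b
        = x * (a * b) + y * (a * c) + z * (b * c) := by ring
    have f2 : y' * (a * c) + (x' * a + z' * c) * b
        = x' * (a * b) + y' * (a * c) + z' * (b * c) := by ring
    have h2 : y * (a * c) + (x * a + z * c) * b
        = y' * (a * c) + (x' * a + z' * c) * b := by rw [f1, f2]; exact heq
    have hmodb : (y * (a * c)) % b = (y' * (a * c)) % b := by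
      have := congrArg (· % b) h2
      simpa [Nat.add_mul_mod_self_right] using this
    have hcopb : Nat.Coprime (a * c) b := Nat.Coprime.mul cab cbc.symm
    have hyy : y ≡ y' [MOD b] := Nat.ModEq.cancel_right_of_coprime hcopb.symm hmodb
    have hyb : y < b := by
      have hy1 : y * (a * c) < b * (a * c) := by
        have : y * (a * c) ≤ s := by omega
        have hsb : s < b * (a * c) := by
          calc s < a * b * c := hs
          _ = b * (a * c) := by ring
        omega
      exact Nat.lt_of_mul_lt_mul_right hy1
    have hyb' : y' < b := by
      have hy1 : y' * (a * c) < b * (a * c) := by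
        have : y' * (a * c) ≤ s := by omega
        have hsb : s < b * (a * c) := by
          calc s < a * b * c := hs
          _ = b * (a * c) := by ring
        omega
      exact Nat.lt_of_mul_lt_mul_right hy1
    have hy : y = y' := Nat.ModEq.eq_of_lt_of_lt hyy hyb hyb'
    subst hx; subst hy
    have hz : z * (b * c) = z' * (b * c) := by omega
    have hbc0 : 0 < b * c := Nat.mul_pos hbpos hcpos
    exact ⟨rfl, rfl, Nat.eq_of_mul_eq_mul_right hbc0 hz⟩
  refine ⟨(u, v, w), huvw, ?_⟩
  rintro ⟨u', v', w'⟩ h'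
  obtain ⟨h1, h2, h3⟩ := key u' v' w' u v w h' huvw
  simp [h1, h2, h3]
end

section
/- Let α ≥ β ≥ γ ≥ 1 be real numbers and let η = 1/α + 1/β + 1/γ. Then the number of triples (x₁,x₂,x₃) ∈ ℕ³ with x₁/α + x₂/β + x₃/γ ≤ 1 is at most (αβγ/6)·(1+η)³. -/
/-!
Sum the indicator of the simplex over `z`, then `y`, then `x`. Each summation is an instance of
one estimate for truncated powers `u₊ⁿ`: since `(n + 1) h bⁿ ≤ (b + h)ⁿ⁺¹ - bⁿ⁺¹` for `b, h ≥ 0`,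
the sum `∑ₖ (c - k/m)₊ⁿ` telescopes against `m/(n+1) · (c + 1/m - k/m)₊ⁿ⁺¹` and is at most
`m/(n+1) · (c + 1/m)₊ⁿ⁺¹`. Three steps give `αβγ/6 · (1 + 1/α + 1/β + 1/γ)³`.
-/

open Finset

/-- The truncated power `x₊ⁿ`; for `n = 0` it is the indicator of `0 ≤ x`, not the constant `1`. -/
noncomputable def truncPow (n : ℕ) (x : ℝ) : ℝ := if 0 ≤ x then x ^ n else 0

lemma truncPow_nonneg (n : ℕ) (x : ℝ) : 0 ≤ truncPow n x := by
  unfold truncPow; split_ifs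
  · positivity
  · rfl

lemma truncPow_of_nonneg {x : ℝ} (hx : 0 ≤ x) (n : ℕ) : truncPow n x = x ^ n := if_pos hx

lemma truncPow_of_neg {x : ℝ} (hx : x < 0) (n : ℕ) : truncPow n x = 0 := if_neg hx.not_ge

lemma mul_pow_le_add_pow_sub_pow {b h : ℝ} (hb : 0 ≤ b) (hh : 0 ≤ h) (n : ℕ) :
    (n + 1) * h * b ^ n ≤ (b + h) ^ (n + 1) - b ^ (n + 1) := by
  induction n with
  | zero => simp
  | succ n ih =>
    have hstep : (b + h) ^ (n + 2) - b ^ (n + 2)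
        = (b + h) * ((b + h) ^ (n + 1) - b ^ (n + 1)) + h * b ^ (n + 1) := by ring
    have hih : b * ((n + 1) * h * b ^ n) ≤ (b + h) * ((b + h) ^ (n + 1) - b ^ (n + 1)) :=
      mul_le_mul (by linarith) ih (by positivity) (by positivity)
    have hb' : b * ((n + 1) * h * b ^ n) = (n + 1) * h * b ^ (n + 1) := by ring
    rw [hstep]; push_cast
    linarith [mul_nonneg hh (pow_nonneg hb (n + 1))]

lemma truncPow_le_sub {m : ℝ} (hm : 0 < m) (n : ℕ) (b : ℝ) :
    truncPow n b ≤ m / (n + 1) * (truncPow (n + 1) (b + 1 / m) - truncPow (n + 1) b) := by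
  rcases lt_or_ge b 0 with hb | hb
  · rw [truncPow_of_neg hb, truncPow_of_neg hb, sub_zero]
    exact mul_nonneg (by positivity) (truncPow_nonneg _ _)
  · have hbm : 0 ≤ b + 1 / m := by positivity
    rw [truncPow_of_nonneg hb, truncPow_of_nonneg hbm, truncPow_of_nonneg hb]
    have hbern := mul_pow_le_add_pow_sub_pow hb (by positivity : 0 ≤ 1 / m) n
    calc b ^ n = m / (n + 1) * ((n + 1) * (1 / m) * b ^ n) := by field_simp
      _ ≤ _ := by gcongr

lemma sum_truncPow_sub_div_le {m : ℝ} (hm : 0 < m) (n : ℕ) (c : ℝ) (K : ℕ) :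
    ∑ k ∈ range K, truncPow n (c - k / m) ≤ m / (n + 1) * truncPow (n + 1) (c + 1 / m) := by
  set g : ℕ → ℝ := fun k => m / (n + 1) * truncPow (n + 1) (c + 1 / m - k / m)
  have hstep : ∀ k : ℕ, truncPow n (c - k / m) ≤ g k - g (k + 1) := by
    intro k
    have hk := truncPow_le_sub hm n (c - k / m)
    simp only [g, ← mul_sub]
    convert hk using 4 <;> push_cast <;> ring
  calc ∑ k ∈ range K, truncPow n (c - k / m) ≤ ∑ k ∈ range K, (g k - g (k + 1)) :=
        sum_le_sum fun k _ => hstep k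
    _ = g 0 - g K := sum_range_sub' g K
    _ ≤ g 0 := sub_le_self _ (mul_nonneg (by positivity) (truncPow_nonneg _ _))
    _ = _ := by simp [g]

lemma le_mul_of_div_add_le {a x t s : ℝ} (ha : 0 < a) (hs : 0 ≤ s) (h : x / a + s ≤ t) :
    x ≤ a * t := by
  rw [← div_le_iff₀' ha]; linarith

lemma ncard_simplex_eq_sum {α β γ : ℝ} (hα : 0 < α) (hβ : 0 < β) (hγ : 0 < γ) (t : ℝ) :
    ({p : ℕ × ℕ × ℕ | (p.1 : ℝ) / α + (p.2.1 : ℝ) / β + (p.2.2 : ℝ) / γ ≤ t}.ncard : ℝ)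
      = ∑ x ∈ range (⌊α * t⌋₊ + 1), ∑ y ∈ range (⌊β * t⌋₊ + 1), ∑ z ∈ range (⌊γ * t⌋₊ + 1),
          truncPow 0 (t - x / α - y / β - z / γ) := by
  classical
  have hbox : {p : ℕ × ℕ × ℕ | (p.1 : ℝ) / α + (p.2.1 : ℝ) / β + (p.2.2 : ℝ) / γ ≤ t}
      = ↑((range (⌊α * t⌋₊ + 1) ×ˢ range (⌊β * t⌋₊ + 1) ×ˢ range (⌊γ * t⌋₊ + 1)).filter
          fun p : ℕ × ℕ × ℕ => (p.1 : ℝ) / α + (p.2.1 : ℝ) / β + (p.2.2 : ℝ) / γ ≤ t) := by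
    ext ⟨x, y, z⟩
    simp only [Set.mem_ofPred_eq, coe_filter, mem_product, mem_range, Nat.lt_succ_iff]
    refine ⟨fun h => ⟨?_, h⟩, And.right⟩
    have hx : (0 : ℝ) ≤ x / α := by positivity
    have hy : (0 : ℝ) ≤ y / β := by positivity
    have hz : (0 : ℝ) ≤ z / γ := by positivity
    refine ⟨Nat.le_floor ?_, Nat.le_floor ?_, Nat.le_floor ?_⟩
    · exact le_mul_of_div_add_le hα (add_nonneg hy hz) (by linarith)
    · exact le_mul_of_div_add_le hβ (add_nonneg hx hz) (by linarith)
    · exact le_mul_of_div_add_le hγ (add_nonneg hx hy) (by linarith)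
  rw [hbox, Set.ncard_coe_finset, card_filter, Nat.cast_sum, sum_product]
  refine sum_congr rfl fun x _ => ?_
  rw [sum_product]
  refine sum_congr rfl fun y _ => sum_congr rfl fun z _ => ?_
  simp only [truncPow, pow_zero, sub_nonneg, Nat.cast_ite, Nat.cast_one, Nat.cast_zero]
  congr 1
  exact propext ⟨fun h => by linarith, fun h => by linarith⟩

lemma ncard_simplex_le {α β γ : ℝ} (hα : 0 < α) (hβ : 0 < β) (hγ : 0 < γ) (t : ℝ) :
    ({p : ℕ × ℕ × ℕ | (p.1 : ℝ) / α + (p.2.1 : ℝ) / β + (p.2.2 : ℝ) / γ ≤ t}.ncard : ℝ)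
      ≤ α * β * γ / 6 * truncPow 3 (t + (1 / α + 1 / β + 1 / γ)) := by
  rw [ncard_simplex_eq_sum hα hβ hγ]
  calc ∑ x ∈ range (⌊α * t⌋₊ + 1), ∑ y ∈ range (⌊β * t⌋₊ + 1), ∑ z ∈ range (⌊γ * t⌋₊ + 1),
          truncPow 0 (t - x / α - y / β - z / γ)
      ≤ ∑ x ∈ range (⌊α * t⌋₊ + 1), ∑ y ∈ range (⌊β * t⌋₊ + 1),
          γ * truncPow 1 (t + 1 / γ - x / α - y / β) := by
        gcongr with x _ y _
        refine (sum_truncPow_sub_div_le hγ 0 _ _).trans_eq ?_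
        rw [sub_add_eq_add_sub, sub_add_eq_add_sub]
        norm_num
    _ ≤ ∑ x ∈ range (⌊α * t⌋₊ + 1), γ * (β / 2 * truncPow 2 (t + 1 / γ + 1 / β - x / α)) := by
        gcongr with x _
        rw [← mul_sum]
        gcongr
        refine (sum_truncPow_sub_div_le hβ 1 _ _).trans_eq ?_
        rw [sub_add_eq_add_sub]
        norm_num
    _ ≤ γ * (β / 2 * (α / 3 * truncPow 3 (t + 1 / γ + 1 / β + 1 / α))) := by
        rw [← mul_sum, ← mul_sum]
        gcongr
        refine (sum_truncPow_sub_div_le hα 2 _ _).trans_eq ?_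
        norm_num
    _ = _ := by ring_nf

theorem lattice_point_bound_weak
    (α β γ : ℝ) (hγ : 1 ≤ γ) (hβγ : γ ≤ β) (hαβ : β ≤ α) :
    ({t : ℕ × ℕ × ℕ | (t.1 : ℝ) / α + (t.2.1 : ℝ) / β + (t.2.2 : ℝ) / γ ≤ 1}.ncard : ℝ)
      ≤ α * β * γ / 6 * (1 + (1 / α + 1 / β + 1 / γ)) ^ 3 := by
  have hγ0 : 0 < γ := by linarith
  have hβ0 : 0 < β := by linarith
  have hα0 : 0 < α := by linarith
  rw [← truncPow_of_nonneg (by positivity)]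
  exact ncard_simplex_le hα0 hβ0 hγ0 1
end

section
/- Define F(a,b,c) = abc/3 − (7/12)(ab+ac+bc) − (1/6)(a+b+c) + 47/12 for real numbers a, b, c. If 4 ≤ a < b < c are pairwise relatively prime positive integers with (a,b,c) ≠ (4,5,7), then F(a,b,c) ≥ 0. -/
theorem F_nonneg
    (a b c : ℕ) (ha : 4 ≤ a) (hab : a < b) (hbc : b < c)
    (cab : Nat.Coprime a b) (cac : Nat.Coprime a c) (cbc : Nat.Coprime b c)
    (hne : ¬ (a = 4 ∧ b = 5 ∧ c = 7)) :
    (0 : ℝ) ≤ (a : ℝ) * b * c / 3 - (7 / 12) * (a * b + a * c + b * c)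
      - (1 / 6) * (a + b + c) + 47 / 12 := by
  have key : 0 ≤ 4 * (a:ℤ) * b * c - 7 * (a * b + a * c + b * c) - 2 * (a + b + c) + 47 := by
    have hA : (4:ℤ) ≤ (a:ℤ) := by exact_mod_cast ha
    have hB : (a:ℤ) + 1 ≤ (b:ℤ) := by exact_mod_cast hab
    have hC : (b:ℤ) + 1 ≤ (c:ℤ) := by exact_mod_cast hbc
    by_cases h8 : 8 ≤ (c:ℤ)
    · nlinarith [mul_nonneg (sub_nonneg.2 hA) (sub_nonneg.2 hB),
        mul_nonneg (mul_nonneg (sub_nonneg.2 hA) (sub_nonneg.2 hB)) (sub_nonneg.2 h8),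
        mul_nonneg (sub_nonneg.2 hB) (sub_nonneg.2 h8),
        mul_nonneg (sub_nonneg.2 hA) (sub_nonneg.2 h8)]
    · push_neg at h8
      have hc7 : c ≤ 7 := by omega
      have ha7 : a ≤ 5 := by omega
      have hb7 : b ≤ 6 := by omega
      interval_cases a <;> interval_cases b <;> interval_cases c <;>
        simp_all [Nat.Coprime]
  have key' : (0:ℝ) ≤ ((4 * (a:ℤ) * b * c - 7 * (a * b + a * c + b * c) - 2 * (a + b + c) + 47 : ℤ) : ℝ) := by
    exact_mod_cast key
  push_cast at key'
  linarith
end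

section
/- Let m ≥ 2 and ℓ ≥ 2m be positive integers with ℓ even, and let T = ⟨mℓ, mℓ+m, mℓ+2m, 2m(ℓ+1)+1⟩. Then the Apéry set Ap(T; mℓ) = {s ∈ T : s − mℓ ∉ T} consists exactly of the elements x·(mℓ+m) + y·(mℓ+2m) + z·(2m(ℓ+1)+1) with x ∈ {0,1}, y ∈ {0,1,…,ℓ/2 − 1}, z ∈ {0,1,…,m−1}. -/
private lemma helper1 {l A B s r : ℕ} (hl : 0 < l) (hs : s < l) (hr : r < l)
    (h : A * l + s = B * l + r) : A = B ∧ s = r := by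
  have h1 : s = r := by
    have h2 := congrArg (· % l) h
    simpa [Nat.mul_add_mod', Nat.mod_eq_of_lt hs, Nat.mod_eq_of_lt hr] using h2
  subst h1
  have h3 : A * l = B * l := Nat.add_right_cancel h
  exact ⟨Nat.eq_of_mul_eq_mul_right hl h3, rfl⟩

private lemma helper2 {n s e a b : ℕ} (h : s + a * n = e + b * n) (hse : s < e) :
    ∃ j, e = s + (j + 1) * n := by
  have hba : b < a := by
    by_contra hba
    push_neg at hba
    have h2 : a * n ≤ b * n := Nat.mul_le_mul_right n hba
    linarith
  have h3 : (a - b) * n + b * n = a * n := by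
    rw [← Nat.add_mul, Nat.sub_add_cancel hba.le]
  have h4 : s + (a - b) * n = e := by linarith
  refine ⟨a - b - 1, ?_⟩
  have h5 : a - b - 1 + 1 = a - b := by omega
  rw [h5]
  exact h4.symm

private lemma keyB (m l : ℕ) (hm : 2 ≤ m) (hl : 2 * m ≤ l) (hle : Even l)
    (x y z u v w z' : ℕ) (hx : x ≤ 1) (hy : y ≤ l / 2 - 1) (hz : z ≤ m - 1) :
    x * (m * l + m) + y * (m * l + 2 * m) + z * (2 * m * (l + 1) + 1) ≠
      u * (m * l) + v * (m * l + m) + w * (m * l + 2 * m) + z' * (2 * m * (l + 1) + 1) + m * l := by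
  intro h
  have hl2 : l % 2 = 0 := Nat.even_iff.mp hle
  have hm0 : 0 < m := by omega
  have hl4 : 4 ≤ l := by omega
  -- step 1: z' % m = z
  have e1 : x * (m * l + m) + y * (m * l + 2 * m) + z * (2 * m * (l + 1) + 1)
      = (x * (l + 1) + y * (l + 2) + z * (2 * (l + 1))) * m + z := by ring
  have e2 : u * (m * l) + v * (m * l + m) + w * (m * l + 2 * m)
        + z' * (2 * m * (l + 1) + 1) + m * l
      = (u * l + v * (l + 1) + w * (l + 2) + z' * (2 * (l + 1)) + l) * m + z' := by ring
  have h' : (x * (l + 1) + y * (l + 2) + z * (2 * (l + 1))) * m + z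
      = (u * l + v * (l + 1) + w * (l + 2) + z' * (2 * (l + 1)) + l) * m + z' := by
    rw [← e1, ← e2]; exact h
  have hzz : z % m = z' % m := by
    simpa [Nat.mul_add_mod'] using congrArg (· % m) h'
  have hzm : z < m := by omega
  rw [Nat.mod_eq_of_lt hzm] at hzz
  obtain ⟨k, hzk⟩ : ∃ k, z' = k * m + z := by
    refine ⟨z' / m, ?_⟩
    rw [hzz]
    exact (Nat.div_add_mod' z' m).symm
  obtain ⟨q, r, hrl, hqr⟩ : ∃ q r, r < l ∧ q * l + r = v + 2 * w + k * (2 * m + 1) :=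
    ⟨_, _, Nat.mod_lt _ (by omega), Nat.div_add_mod' _ l⟩
  have eqc : m * ((x + y) * l + (x + 2 * y)) + z * (2 * m * (l + 1) + 1)
      = m * ((u + 1 + v + w + 2 * (m * k) + q) * l + r) + z * (2 * m * (l + 1) + 1) := by
    calc m * ((x + y) * l + (x + 2 * y)) + z * (2 * m * (l + 1) + 1)
        = x * (m * l + m) + y * (m * l + 2 * m) + z * (2 * m * (l + 1) + 1) := by ring
      _ = u * (m * l) + v * (m * l + m) + w * (m * l + 2 * m)
            + z' * (2 * m * (l + 1) + 1) + m * l := h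
      _ = u * (m * l) + v * (m * l + m) + w * (m * l + 2 * m)
            + (k * m + z) * (2 * m * (l + 1) + 1) + m * l := by rw [← hzk]
      _ = m * ((u + 1 + v + w + 2 * (m * k)) * l + (v + 2 * w + k * (2 * m + 1)))
            + z * (2 * m * (l + 1) + 1) := by ring
      _ = m * ((u + 1 + v + w + 2 * (m * k) + q) * l + r) + z * (2 * m * (l + 1) + 1) := by
          rw [← hqr]; ring
  have eq1 := Nat.add_right_cancel eqc
  have eq2 := Nat.eq_of_mul_eq_mul_left hm0 eq1
  have hxyl : x + 2 * y < l := by omega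
  obtain ⟨hAeq, hSeq⟩ := helper1 (by omega) hxyl hrl eq2
  have hkmk : k ≤ m * k := Nat.le_mul_of_pos_left k hm0
  have hsplit : k * (2 * m + 1) = 2 * (m * k) + k := by ring
  rw [hsplit] at hqr
  obtain ⟨P, hP⟩ : ∃ p, m * k = p := ⟨_, rfl⟩
  obtain ⟨Q, hQ⟩ : ∃ p, q * l = p := ⟨_, rfl⟩
  rw [hP] at hAeq hkmk hqr
  rw [hQ] at hqr
  clear eqc eq1 eq2 h h' e1 e2 hzz hzk hsplit hP hQ
  omega

theorem apery_set_T
    (m l : ℕ) (hm : 2 ≤ m) (hl : 2 * m ≤ l) (hle : Even l) :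
    {s : ℕ | (∃ u v w z : ℕ,
        s = u * (m * l) + v * (m * l + m) + w * (m * l + 2 * m) + z * (2 * m * (l + 1) + 1)) ∧
      ¬ ∃ t : ℕ, (∃ u v w z : ℕ,
        t = u * (m * l) + v * (m * l + m) + w * (m * l + 2 * m) + z * (2 * m * (l + 1) + 1)) ∧
        s = t + m * l}
    = {s : ℕ | ∃ x y z : ℕ, x ≤ 1 ∧ y ≤ l / 2 - 1 ∧ z ≤ m - 1 ∧
        s = x * (m * l + m) + y * (m * l + 2 * m) + z * (2 * m * (l + 1) + 1)} := by
  have hm0 : 0 < m := by omega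
  have hl2 : l % 2 = 0 := Nat.even_iff.mp hle
  have hl4 : 4 ≤ l := by omega
  ext s
  simp only [Set.mem_setOf_eq]
  constructor
  · rintro ⟨⟨u, v, w, z₀, hs⟩, hmin⟩
    obtain ⟨k, z, hzm, hz₀⟩ : ∃ k z, z < m ∧ z₀ = k * m + z :=
      ⟨z₀ / m, z₀ % m, Nat.mod_lt _ hm0, (Nat.div_add_mod' z₀ m).symm⟩
    obtain ⟨q, r, hrl, hqr0⟩ : ∃ q r, r < l ∧ q * l + r = v + 2 * w + k * (2 * m + 1) :=
      ⟨_, _, Nat.mod_lt _ (by omega), Nat.div_add_mod' _ l⟩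
    obtain ⟨x, y, hx1, hxy⟩ : ∃ x y, x ≤ 1 ∧ x + 2 * y = r := ⟨r % 2, r / 2, by omega, by omega⟩
    have hy1 : y ≤ l / 2 - 1 := by omega
    have hz1 : z ≤ m - 1 := by omega
    have hqr' : q * l + (x + 2 * y) = v + 2 * w + k * (2 * m + 1) := by rw [hxy]; exact hqr0
    have hqrZ : ((q : ℤ) * l + (x + 2 * y) : ℤ) = v + 2 * w + k * (2 * m + 1) := by
      exact_mod_cast hqr'
    have hcomp : s + (x + y) * (m * l)
        = (x * (m * l + m) + y * (m * l + 2 * m) + z * (2 * m * (l + 1) + 1))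
          + (u + v + w + 2 * (m * k) + q) * (m * l) := by
      rw [hs, hz₀]
      zify
      linear_combination (-(m : ℤ)) * hqrZ
    rcases Nat.lt_trichotomy s
        (x * (m * l + m) + y * (m * l + 2 * m) + z * (2 * m * (l + 1) + 1)) with hlt | heq | hgt
    · exfalso
      obtain ⟨j, hj⟩ := helper2 hcomp hlt
      exact keyB m l hm hl hle x y z (u + j) v w z₀ hx1 hy1 hz1 (by rw [hj, hs]; ring)
    · exact ⟨x, y, z, hx1, hy1, hz1, heq⟩
    · exfalso
      obtain ⟨j, hj⟩ := helper2 hcomp.symm hgt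
      refine hmin ⟨(x * (m * l + m) + y * (m * l + 2 * m) + z * (2 * m * (l + 1) + 1))
        + j * (m * l), ⟨j, x, y, z, by ring⟩, by rw [hj]; ring⟩
  · rintro ⟨x, y, z, hx1, hy1, hz1, hseq⟩
    refine ⟨⟨0, x, y, z, by rw [hseq]; ring⟩, ?_⟩
    rintro ⟨t, ⟨u, v, w, z', ht⟩, hst⟩
    exact keyB m l hm hl hle x y z u v w z' hx1 hy1 hz1 (by rw [← hseq, hst, ht])
end

section
/- Let ℓ ≥ 4 be an even integer and let S* = ⟨2ℓ, 2ℓ+2, 2ℓ+4, 4ℓ+5, ℓ(ℓ+2)+1⟩. Then the genus of S* (the number of positive integers not in S*) equals ℓ²/2 + 2ℓ. -/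
/-!
Write `ℓ = 2h` and `U = ⟨ℓ, ℓ + 1, ℓ + 2⟩`, whose elements of level `k` fill `[kℓ, kℓ + 2k]`,
so that `U` has `h²` gaps. The sums of two odd generators lie in `2U`, hence
`S* = 2U ∪ (4ℓ + 5 + 2U) ∪ (ℓ(ℓ + 2) + 1 + 2U)`, and its even gaps are the `h²` doubled gaps
of `U`. An odd `2m + 1` lies in `S*` iff `m ∈ (2ℓ + 2 + U) ∪ (hℓ + ℓ + U)`; the first set
misses `2ℓ + 2 + h²` numbers, and the second adds only `hℓ + ℓ` and `hℓ + 2ℓ + 1` to it,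
because `(h - 1)ℓ + u - 2 ∈ U` for every other `u ∈ U`. In total there are
`h² + (h² + 4h) = ℓ²/2 + 2ℓ` gaps.
-/

open Finset

theorem sum_range_two_mul_add_one (n : ℕ) : ∑ i ∈ range n, (2 * i + 1) = n ^ 2 := by
  induction n with
  | zero => rfl
  | succ n ih => rw [sum_range_succ, ih]; ring

/-- The numerical semigroup `⟨a, a + 1, a + 2⟩`: the sums of `k` generators fill
`[k a, k a + 2 k]`. -/
def intervalSemigroup (a : ℕ) : AddSubmonoid ℕ where
  carrier := {m | ∃ k, k * a ≤ m ∧ m ≤ k * a + 2 * k}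
  zero_mem' := ⟨0, by simp⟩
  add_mem' := by
    rintro _ _ ⟨k, hk, hk'⟩ ⟨k', hk'', hk'''⟩
    exact ⟨k + k', by rw [add_mul]; omega, by rw [add_mul]; omega⟩

namespace intervalSemigroup

variable {a m : ℕ}

theorem mem_iff : m ∈ intervalSemigroup a ↔ ∃ k, k * a ≤ m ∧ m ≤ k * a + 2 * k := Iff.rfl

theorem mem_iff_exists_combination :
    m ∈ intervalSemigroup a ↔ ∃ x y z, m = x * a + y * (a + 1) + z * (a + 2) := by
  constructor
  · rintro ⟨k, hk, hk'⟩
    obtain ⟨j, rfl, hj⟩ : ∃ j, m = k * a + j ∧ j ≤ 2 * k := ⟨m - k * a, by omega, by omega⟩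
    rcases Nat.even_or_odd' j with ⟨z, rfl | rfl⟩
    · obtain ⟨x, rfl⟩ : ∃ x, k = z + x := ⟨k - z, by omega⟩
      exact ⟨x, 0, z, by ring⟩
    · obtain ⟨x, rfl⟩ : ∃ x, k = z + 1 + x := ⟨k - z - 1, by omega⟩
      exact ⟨x, 1, z, by ring⟩
  · rintro ⟨x, y, z, rfl⟩
    exact ⟨x + y + z, by nlinarith, by nlinarith⟩

theorem notMem_iff : m ∉ intervalSemigroup a ↔ ∃ k, k * a + 2 * k < m ∧ m < (k + 1) * a := by
  rw [mem_iff]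
  constructor
  · intro hm
    rcases Nat.eq_zero_or_pos a with rfl | ha
    · exact absurd ⟨m, by simp, by omega⟩ hm
    refine ⟨m / a, ?_, ?_⟩
    · by_contra! h
      exact hm ⟨m / a, Nat.div_mul_le_self m a, h⟩
    · rw [add_mul, one_mul]; exact Nat.lt_div_mul_add ha
  · rintro ⟨k, hk, hk'⟩ ⟨k', hk'', hk'''⟩
    rcases lt_or_ge k k' with h | h
    · have : (k + 1) * a ≤ k' * a := Nat.mul_le_mul_right a h; omega
    · have := Nat.mul_le_mul_right a h; omega

theorem coe_compl_eq_biUnion (h : ℕ) :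
    (intervalSemigroup (2 * h) : Set ℕ)ᶜ =
      ↑((range h).biUnion fun k => Ioo (k * (2 * h) + 2 * k) ((k + 1) * (2 * h))) := by
  ext m
  simp only [Set.mem_compl_iff, SetLike.mem_coe, notMem_iff, coe_biUnion, coe_range,
    Set.mem_Iio, coe_Ioo, Set.mem_iUnion, Set.mem_Ioo, exists_prop]
  refine exists_congr fun k => ⟨fun hk => ⟨?_, hk⟩, And.right⟩
  by_contra! hkh
  have : (k + 1) * (2 * h) ≤ k * (2 * h) + 2 * k := by nlinarith
  omega

theorem ncard_compl (h : ℕ) : (intervalSemigroup (2 * h) : Set ℕ)ᶜ.ncard = h ^ 2 := by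
  rw [coe_compl_eq_biUnion, Set.ncard_coe_finset, card_biUnion]
  · calc ∑ k ∈ range h, #(Ioo (k * (2 * h) + 2 * k) ((k + 1) * (2 * h)))
        = ∑ k ∈ range h, (2 * (h - 1 - k) + 1) := by
          refine sum_congr rfl fun k hk => ?_
          have := mem_range.1 hk
          rw [Nat.card_Ioo, add_one_mul]
          omega
      _ = h ^ 2 := by rw [sum_range_reflect (fun j => 2 * j + 1), sum_range_two_mul_add_one]
  · intro k _ k' _ hkk'
    simp only [Function.onFun, disjoint_left, mem_Ioo]
    rintro m ⟨hm, hm'⟩ ⟨hm'', hm'''⟩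
    rcases Nat.lt_or_gt_of_ne hkk' with hlt | hlt
    · have : (k + 1) * (2 * h) ≤ k' * (2 * h) := Nat.mul_le_mul_right _ hlt; omega
    · have : (k' + 1) * (2 * h) ≤ k * (2 * h) := Nat.mul_le_mul_right _ hlt; omega

-- Write `u = k' a + j` with `j ≤ 2 k'`. If `j ≥ 2`, then `k a + u - 2` lies on level `k + k'`;
-- otherwise on level `k + k' - 1`, which has room for the extra `a - 2 ≤ 2 k` because
-- `j + 2 ≤ 2 k'` unless `u = 0` or `u = a + 1`.
theorem exists_mul_add_eq_add_two {k u : ℕ} (ha : 2 ≤ a) (hk : a ≤ 2 * k + 2)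
    (hu : u ∈ intervalSemigroup a) (hu0 : u ≠ 0) (hu1 : u ≠ a + 1) :
    ∃ w ∈ intervalSemigroup a, k * a + u = w + 2 := by
  obtain ⟨k', hk', hk''⟩ := hu
  obtain ⟨k', rfl⟩ : ∃ k'', k' = k'' + 1 := ⟨k' - 1, by rcases k' with _ | _ <;> simp_all⟩
  rw [add_one_mul] at hk' hk''
  refine ⟨k * a + u - 2, ?_, by omega⟩
  rcases le_or_gt (k' * a + a + 2) u with hj | hj
  · exact ⟨k + k' + 1, by rw [add_mul, add_mul]; omega, by rw [add_mul, add_mul]; omega⟩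
  · have hj' : u ≤ k' * a + a + 2 * k' := by
      rcases Nat.eq_zero_or_pos k' with rfl | _
      · rw [zero_mul] at hk' ⊢; omega
      · omega
    exact ⟨k + k', by rw [add_mul]; omega, by rw [add_mul]; omega⟩

end intervalSemigroup

theorem ncard_compl_image_const_add (c : ℕ) {s : Set ℕ} (hs : sᶜ.Finite) :
    ((c + ·) '' s)ᶜ.ncard = c + sᶜ.ncard := by
  have hsplit : ((c + ·) '' s)ᶜ = Set.Iio c ∪ (c + ·) '' sᶜ := by
    ext m
    simp only [Set.mem_compl_iff, Set.mem_image, Set.mem_union, Set.mem_Iio, not_exists,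
      not_and]
    constructor
    · intro hm
      by_contra! hc
      exact hc.2 (m - c) (fun hs' => hm _ hs' (by omega)) (by omega)
    · rintro (hm | ⟨u, hu, rfl⟩) v hv hvm
      · omega
      · exact hu (add_left_cancel hvm ▸ hv)
  have hdisj : Disjoint (Set.Iio c) ((c + ·) '' sᶜ) := by
    rw [Set.disjoint_left]
    rintro m hm ⟨u, -, rfl⟩
    simp at hm
  rw [hsplit, Set.ncard_union_eq hdisj (Set.finite_Iio c) (hs.image _), Set.ncard_Iio_nat,
    Set.ncard_image_of_injective _ (add_right_injective c)]

theorem ncard_eq_ncard_two_mul_add_ncard_two_mul_add_one (s : Set ℕ)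
    (hs₀ : {m | 2 * m ∈ s}.Finite) (hs₁ : {m | 2 * m + 1 ∈ s}.Finite) :
    s.ncard = {m | 2 * m ∈ s}.ncard + {m | 2 * m + 1 ∈ s}.ncard := by
  have hsplit : s = (2 * ·) '' {m | 2 * m ∈ s} ∪ (2 * · + 1) '' {m | 2 * m + 1 ∈ s} := by
    ext n
    simp only [Set.mem_union, Set.mem_image, Set.mem_ofPred_eq]
    constructor
    · intro hn
      rcases Nat.even_or_odd' n with ⟨m, rfl | rfl⟩
      · exact Or.inl ⟨m, hn, rfl⟩
      · exact Or.inr ⟨m, hn, rfl⟩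
    · rintro (⟨m, hm, rfl⟩ | ⟨m, hm, rfl⟩) <;> exact hm
  have hdisj : Disjoint ((2 * ·) '' {m | 2 * m ∈ s}) ((2 * · + 1) '' {m | 2 * m + 1 ∈ s}) := by
    rw [Set.disjoint_left]
    rintro _ ⟨m, -, rfl⟩ ⟨m', -, hm'⟩
    dsimp only at hm'
    omega
  conv_lhs => rw [hsplit]
  rw [Set.ncard_union_eq hdisj (hs₀.image _) (hs₁.image _),
    Set.ncard_image_of_injective _ (fun m m' hm => by simpa using hm),
    Set.ncard_image_of_injective _ (fun m m' hm => by simpa using hm)]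

/-- `S*` for `ℓ = 2 h`, as `2U ∪ (4ℓ + 5 + 2U) ∪ (ℓ(ℓ + 2) + 1 + 2U)` with
`U = intervalSemigroup ℓ`. -/
def Sstar (h : ℕ) : AddSubmonoid ℕ where
  carrier := {n | ∃ u ∈ intervalSemigroup (2 * h),
    n = 2 * u ∨ n = 2 * (4 * h + 2 + u) + 1 ∨ n = 2 * (2 * h ^ 2 + 2 * h + u) + 1}
  zero_mem' := ⟨0, zero_mem _, Or.inl rfl⟩
  add_mem' := by
    have h₁ : 8 * h + 5 ∈ intervalSemigroup (2 * h) := ⟨4, by omega, by omega⟩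
    have h₂ : 2 * h ^ 2 + 6 * h + 3 ∈ intervalSemigroup (2 * h) :=
      ⟨h + 3, by ring_nf; omega, by ring_nf; omega⟩
    have h₃ : 4 * h ^ 2 + 4 * h + 1 ∈ intervalSemigroup (2 * h) :=
      ⟨2 * h + 1, by ring_nf; omega, by ring_nf; omega⟩
    rintro _ _ ⟨u, hu, rfl | rfl | rfl⟩ ⟨v, hv, rfl | rfl | rfl⟩
    all_goals first
      | exact ⟨u + v, add_mem hu hv, by omega⟩
      | exact ⟨u + v + _, add_mem (add_mem hu hv) h₁, by omega⟩
      | exact ⟨u + v + _, add_mem (add_mem hu hv) h₂, by omega⟩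
      | exact ⟨u + v + _, add_mem (add_mem hu hv) h₃, by omega⟩

namespace Sstar

variable {h m : ℕ}

theorem mem_iff_exists_combination {n : ℕ} :
    (∃ x₁ x₂ x₃ x₄ x₅ : ℕ,
        n = x₁ * (2 * (2 * h)) + x₂ * (2 * (2 * h) + 2) + x₃ * (2 * (2 * h) + 4)
          + x₄ * (4 * (2 * h) + 5) + x₅ * (2 * h * (2 * h + 2) + 1)) ↔ n ∈ Sstar h := by
  constructor
  · rintro ⟨x₁, x₂, x₃, x₄, x₅, rfl⟩
    have hU : 2 * h ∈ intervalSemigroup (2 * h) := ⟨1, by omega, by omega⟩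
    have hU₁ : 2 * h + 1 ∈ intervalSemigroup (2 * h) := ⟨1, by omega, by omega⟩
    have hU₂ : 2 * h + 2 ∈ intervalSemigroup (2 * h) := ⟨1, by omega, by omega⟩
    simp only [← smul_eq_mul x₁, ← smul_eq_mul x₂, ← smul_eq_mul x₃, ← smul_eq_mul x₄,
      ← smul_eq_mul x₅]
    refine add_mem (add_mem (add_mem (add_mem ?_ ?_) ?_) ?_) ?_ <;> refine nsmul_mem ?_ _
    · exact ⟨_, hU, by omega⟩
    · exact ⟨_, hU₁, by omega⟩
    · exact ⟨_, hU₂, by omega⟩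
    · exact ⟨0, zero_mem _, by omega⟩
    · exact ⟨0, zero_mem _, Or.inr (Or.inr (by ring))⟩
  · rintro ⟨u, hu, hn⟩
    obtain ⟨x, y, z, rfl⟩ := intervalSemigroup.mem_iff_exists_combination.1 hu
    rcases hn with rfl | rfl | rfl
    · exact ⟨x, y, z, 0, 0, by ring⟩
    · exact ⟨x, y, z, 1, 0, by ring⟩
    · exact ⟨x, y, z, 0, 1, by ring⟩

theorem two_mul_mem_iff : 2 * m ∈ Sstar h ↔ m ∈ intervalSemigroup (2 * h) := by
  refine ⟨fun ⟨u, hu, hm⟩ => ?_, fun hm => ⟨m, hm, Or.inl rfl⟩⟩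
  obtain rfl : m = u := by omega
  exact hu

theorem two_mul_add_one_mem_iff : 2 * m + 1 ∈ Sstar h ↔
    m ∈ (4 * h + 2 + ·) '' intervalSemigroup (2 * h) ∨
      m ∈ (2 * h ^ 2 + 2 * h + ·) '' intervalSemigroup (2 * h) := by
  constructor
  · rintro ⟨u, hu, hm | hm | hm⟩
    · omega
    · exact Or.inl ⟨u, hu, by dsimp only; omega⟩
    · exact Or.inr ⟨u, hu, by dsimp only; omega⟩
  · rintro (⟨u, hu, rfl⟩ | ⟨u, hu, rfl⟩)
    · exact ⟨u, hu, Or.inr (Or.inl rfl)⟩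
    · exact ⟨u, hu, Or.inr (Or.inr rfl)⟩

theorem ncard_two_mul_notMem : {m | 2 * m ∉ Sstar h}.ncard = h ^ 2 := by
  simp_rw [two_mul_mem_iff]
  exact intervalSemigroup.ncard_compl h

theorem ncard_two_mul_add_one_notMem (hh : 2 ≤ h) :
    {m | 2 * m + 1 ∉ Sstar h}.ncard = h ^ 2 + 4 * h := by
  set U : Set ℕ := ↑(intervalSemigroup (2 * h))
  have hcompl : ((4 * h + 2 + ·) '' U)ᶜ.ncard = h ^ 2 + 4 * h + 2 := by
    rw [ncard_compl_image_const_add _ (Set.finite_of_ncard_ne_zero (by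
      rw [intervalSemigroup.ncard_compl]; positivity)), intervalSemigroup.ncard_compl]
    ring
  obtain ⟨j, rfl⟩ : ∃ j, h = j + 2 := ⟨h - 2, by omega⟩
  have hgaps : {2 * (j + 2) ^ 2 + 2 * (j + 2), 2 * (j + 2) ^ 2 + 4 * (j + 2) + 1} ⊆
      ((4 * (j + 2) + 2 + ·) '' U)ᶜ := by
    rintro _ (rfl | rfl) ⟨u, hu, he⟩ <;> refine intervalSemigroup.notMem_iff.2 ?_ hu
    · exact ⟨j, by ring_nf at he ⊢; omega, by ring_nf at he ⊢; omega⟩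
    · exact ⟨j + 1, by ring_nf at he ⊢; omega, by ring_nf at he ⊢; omega⟩
  have hset : {m | 2 * m + 1 ∉ Sstar (j + 2)} = ((4 * (j + 2) + 2 + ·) '' U)ᶜ \
      {2 * (j + 2) ^ 2 + 2 * (j + 2), 2 * (j + 2) ^ 2 + 4 * (j + 2) + 1} := by
    ext m
    simp only [Set.mem_ofPred_eq, Set.mem_sdiff, Set.mem_compl_iff, Set.mem_insert_iff,
      Set.mem_singleton_iff, two_mul_add_one_mem_iff, not_or]
    constructor
    · rintro ⟨hA, hB⟩
      refine ⟨hA, ?_, ?_⟩ <;> rintro rfl <;> apply hB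
      · exact ⟨0, zero_mem _, by ring⟩
      · exact ⟨2 * (j + 2) + 1, ⟨1, by omega, by omega⟩, by ring⟩
    · rintro ⟨hA, hne₀, hne₁⟩
      refine ⟨hA, ?_⟩
      rintro ⟨u, hu, rfl⟩
      obtain ⟨w, hw, hwu⟩ := intervalSemigroup.exists_mul_add_eq_add_two (k := j + 1)
        (by omega) (by omega) hu (by rintro rfl; exact hne₀ rfl)
        (by rintro rfl; exact hne₁ (by ring))
      exact hA ⟨w, hw, by ring_nf at hwu ⊢; omega⟩
  rw [hset, Set.ncard_sdiff hgaps, hcompl, Set.ncard_pair (by omega)]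
  omega

end Sstar

theorem genus_Sstar_even
    (l : ℕ) (hl : 4 ≤ l) (hle : Even l) :
    {n : ℕ | ¬ ∃ x₁ x₂ x₃ x₄ x₅ : ℕ,
        n = x₁ * (2 * l) + x₂ * (2 * l + 2) + x₃ * (2 * l + 4)
          + x₄ * (4 * l + 5) + x₅ * (l * (l + 2) + 1)}.ncard
      = l ^ 2 / 2 + 2 * l := by
  obtain ⟨h, rfl⟩ := hle.two_dvd
  have hh : 2 ≤ h := by omega
  have heven := Sstar.ncard_two_mul_notMem (h := h)
  have hodd := Sstar.ncard_two_mul_add_one_notMem hh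
  have hfin₀ : {m | 2 * m ∉ Sstar h}.Finite :=
    Set.finite_of_ncard_ne_zero (by rw [heven]; positivity)
  have hfin₁ : {m | 2 * m + 1 ∉ Sstar h}.Finite :=
    Set.finite_of_ncard_ne_zero (by rw [hodd]; positivity)
  simp_rw [Sstar.mem_iff_exists_combination]
  rw [ncard_eq_ncard_two_mul_add_ncard_two_mul_add_one _ hfin₀ hfin₁]
  simp only [Set.mem_ofPred_eq]
  rw [heven, hodd, show (2 * h) ^ 2 = 2 * (2 * h ^ 2) by ring,
    Nat.mul_div_cancel_left _ two_pos]
  ring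
end

section
/- Let ℓ ≥ 5 be an odd integer and let S* = ⟨2ℓ, 2ℓ+2, 2ℓ+4, 4ℓ+5, ℓ(ℓ+3)+1⟩. Then the genus of S* equals (ℓ²+1)/2 + 2ℓ. -/
namespace GenusAux

/-- membership in T = ⟨l, l+1, l+2⟩ -/
def InT (l k : ℕ) : Prop := ∃ x y z : ℕ, k = x * l + y * (l+1) + z * (l+2)

/-- gap set of T (for l = 2s+1) -/
def GTf (l s : ℕ) : Finset ℕ :=
  (Finset.range s).biUnion fun m => Finset.Ico (l*m + 2*m + 1) (l*(m+1))

lemma mem_GTf {l s k : ℕ} :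
    k ∈ GTf l s ↔ ∃ m, m < s ∧ l*m + 2*m + 1 ≤ k ∧ k < l*(m+1) := by
  simp only [GTf, Finset.mem_biUnion, Finset.mem_range, Finset.mem_Ico]

lemma InT_add {l a b : ℕ} (ha : InT l a) (hb : InT l b) : InT l (a+b) := by
  obtain ⟨x,y,z,rfl⟩ := ha
  obtain ⟨x',y',z',rfl⟩ := hb
  exact ⟨x+x', y+y', z+z', by ring⟩

lemma InT_smul {l a : ℕ} (u : ℕ) (ha : InT l a) : InT l (u*a) := by
  induction u with
  | zero => exact ⟨0,0,0, by simp⟩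
  | succ n ih =>
      have := InT_add ih ha
      have e : n * a + a = (n+1) * a := by ring
      rwa [e] at this

lemma InT_iff (w k : ℕ) :
    InT (2*w+5) k ↔ k ∉ GTf (2*w+5) (w+2) := by
  set l := 2*w+5 with hldef
  constructor
  · rintro ⟨x, y, z, rfl⟩ hk
    obtain ⟨m, hm, h1, h2⟩ := mem_GTf.mp hk
    have e : x*l + y*(l+1) + z*(l+2) = l*(x+y+z) + (y+2*z) := by ring
    rcases le_or_gt (x+y+z) m with h | h
    · have h3 : l*(x+y+z) ≤ l*m := Nat.mul_le_mul_left l h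
      linarith
    · have h3 : l*(m+1) ≤ l*(x+y+z) := Nat.mul_le_mul_left l h
      linarith
  · intro h
    have hl0 : 0 < l := by omega
    have hk : l * (k / l) + k % l = k := Nat.div_add_mod k l
    have hrl : k % l < l := Nat.mod_lt _ hl0
    set m := k / l with hm
    set r := k % l with hr
    have hkey : r ≤ 2*m := by
      rcases lt_or_ge m (w+2) with hms | hms
      · have hnot : ¬ (l*m + 2*m + 1 ≤ k ∧ k < l*(m+1)) := by
          intro hc
          exact h (mem_GTf.mpr ⟨m, hms, hc.1, hc.2⟩)
        have hup : k < l*(m+1) := by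
          have e : l*(m+1) = l*m + l := by ring
          linarith
        have : ¬ (l*m + 2*m + 1 ≤ k) := fun hc => hnot ⟨hc, hup⟩
        linarith [not_le.mp this]
      · omega
    have huv : r/2 + r%2 ≤ m := by omega
    obtain ⟨u, hu⟩ : ∃ u, m = u + (r/2 + r%2) := ⟨m - (r/2 + r%2), by omega⟩
    refine ⟨u, r%2, r/2, ?_⟩
    have e : u*l + (r%2)*(l+1) + (r/2)*(l+2)
        = l*(u + (r/2 + r%2)) + (2*(r/2) + r%2) := by ring
    have hr2 : 2*(r/2) + r%2 = r := by omega
    rw [e, hr2, ← hu]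
    exact hk.symm

def InS (l n : ℕ) : Prop :=
  ∃ x₁ x₂ x₃ x₄ x₅ : ℕ,
    n = x₁ * (2 * l) + x₂ * (2 * l + 2) + x₃ * (2 * l + 4)
      + x₄ * (4 * l + 5) + x₅ * (l * (l + 3) + 1)

lemma InS_iff (w n : ℕ) :
    InS (2*w+5) n ↔
      (∃ k, InT (2*w+5) k ∧ n = 2*k)
      ∨ (∃ k, InT (2*w+5) k ∧ n = 4*(2*w+5)+5 + 2*k)
      ∨ (∃ k, InT (2*w+5) k ∧ n = (2*w+5)*((2*w+5)+3)+1 + 2*k) := by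
  set l := 2*w+5 with hldef
  constructor
  · rintro ⟨x1,x2,x3,x4,x5, rfl⟩
    have ha : InT l (4*l+5) := ⟨1,1,2, by ring⟩
    have hb : InT l (l*(l+3)+1) := ⟨l+2,1,0, by ring⟩
    have hc : InT l (l + (w+4)*(l+2)) := ⟨1,0,w+4, by ring⟩
    have ht : InT l (x1*l + x2*(l+1) + x3*(l+2)) := ⟨x1,x2,x3, rfl⟩
    rcases Nat.even_or_odd x4 with ⟨u, hu⟩ | ⟨u, hu⟩ <;>
      rcases Nat.even_or_odd x5 with ⟨v, hv⟩ | ⟨v, hv⟩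
    · exact Or.inl ⟨x1*l + x2*(l+1) + x3*(l+2) + u*(4*l+5) + v*(l*(l+3)+1),
        InT_add (InT_add ht (InT_smul u ha)) (InT_smul v hb),
        by subst hu hv; simp only [hldef]; ring⟩
    · exact Or.inr (Or.inr ⟨x1*l + x2*(l+1) + x3*(l+2) + u*(4*l+5) + v*(l*(l+3)+1),
        InT_add (InT_add ht (InT_smul u ha)) (InT_smul v hb),
        by subst hu hv; simp only [hldef]; ring⟩)
    · exact Or.inr (Or.inl ⟨x1*l + x2*(l+1) + x3*(l+2) + u*(4*l+5) + v*(l*(l+3)+1),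
        InT_add (InT_add ht (InT_smul u ha)) (InT_smul v hb),
        by subst hu hv; simp only [hldef]; ring⟩)
    · exact Or.inl ⟨x1*l + x2*(l+1) + x3*(l+2) + u*(4*l+5) + v*(l*(l+3)+1)
          + (l + (w+4)*(l+2)),
        InT_add (InT_add (InT_add ht (InT_smul u ha)) (InT_smul v hb)) hc,
        by subst hu hv; simp only [hldef]; ring⟩
  · rintro (⟨k, ⟨x,y,z,rfl⟩, rfl⟩ | ⟨k,⟨x,y,z,rfl⟩,rfl⟩ | ⟨k,⟨x,y,z,rfl⟩,rfl⟩)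
    · exact ⟨x,y,z,0,0, by ring⟩
    · exact ⟨x,y,z,1,0, by ring⟩
    · exact ⟨x,y,z,0,1, by ring⟩


/-- the gap set of S* -/
def Gfin (w : ℕ) : Finset ℕ :=
  ((GTf (2*w+5) (w+2)).image (fun k => 2*k))
  ∪ ((Finset.range (2*(2*w+5)+2)).image (fun i => 2*i+1))
  ∪ (((GTf (2*w+5) (w+2)).erase (2*w*w+9*w+8)).image (fun g => 4*(2*w+5)+5+2*g))

lemma GTf_lt {w g : ℕ} (hg : g ∈ GTf (2*w+5) (w+2)) : g < 2*w*w+9*w+10 := by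
  obtain ⟨m, hm, h1, h2⟩ := mem_GTf.mp hg
  have h3 : (2*w+5)*(m+1) ≤ (2*w+5)*(w+2) := Nat.mul_le_mul_left _ (by omega)
  have h4 : (2*w+5)*(w+2) = 2*w*w+9*w+10 := by ring
  omega

lemma GTf_pos {w g : ℕ} (hg : g ∈ GTf (2*w+5) (w+2)) : 1 ≤ g := by
  obtain ⟨m, hm, h1, h2⟩ := mem_GTf.mp hg
  omega

lemma d_mem_GTf (w : ℕ) : 2*w*w+9*w+8 ∈ GTf (2*w+5) (w+2) := by
  refine mem_GTf.mpr ⟨w+1, by omega, ?_, ?_⟩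
  · have : (2*w+5)*(w+1) + 2*(w+1) + 1 = 2*w*w+9*w+8 := by ring
    omega
  · have : (2*w+5)*(w+1+1) = 2*w*w+9*w+10 := by ring
    omega

lemma one_mem_GTf (w : ℕ) : 1 ∈ GTf (2*w+5) (w+2) := by
  refine mem_GTf.mpr ⟨0, by omega, by omega, ?_⟩
  have : (2*w+5)*(0+1) = 2*w+5 := by ring
  omega

lemma gap_eq (w : ℕ) :
    {n : ℕ | ¬ InS (2*w+5) n} = ↑(Gfin w) := by
  ext n
  simp only [Gfin, Set.mem_setOf_eq, Finset.coe_union, Set.mem_union, Finset.coe_image,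
    Set.mem_image, Finset.mem_coe, Finset.mem_range, Finset.mem_erase]
  constructor
  · intro hn
    rcases Nat.even_or_odd n with ⟨k, hk⟩ | ⟨i, hi⟩
    · refine Or.inl (Or.inl ⟨k, ?_, by omega⟩)
      have hIT : ¬ InT (2*w+5) k := fun h =>
        hn ((InS_iff w n).mpr (Or.inl ⟨k, h, by omega⟩))
      rw [InT_iff] at hIT
      exact not_not.mp hIT
    · rcases lt_or_ge i (2*(2*w+5)+2) with hi2 | hi2
      · exact Or.inl (Or.inr ⟨i, hi2, by omega⟩)
      · refine Or.inr ⟨i - (2*(2*w+5)+2), ⟨?_, ?_⟩, by omega⟩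
        · -- g ≠ d
          intro hgd
          apply hn
          refine (InS_iff w n).mpr (Or.inr (Or.inr ⟨0, ⟨0,0,0, by ring⟩, ?_⟩))
          have : (2*w+5)*((2*w+5)+3)+1 = 4*(2*w+5)+5 + 2*(2*w*w+9*w+8) := by ring
          omega
        · have hIT : ¬ InT (2*w+5) (i - (2*(2*w+5)+2)) := fun h =>
            hn ((InS_iff w n).mpr (Or.inr (Or.inl ⟨i - (2*(2*w+5)+2), h, by omega⟩)))
          rw [InT_iff] at hIT
          exact not_not.mp hIT
  · intro hmem hS
    rcases (InS_iff w n).mp hS with ⟨k, hk, rfl⟩ | ⟨k, hk, rfl⟩ | ⟨k, hk, rfl⟩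
    · rcases hmem with (⟨k', hk', he⟩ | ⟨i, hi, he⟩) | ⟨g, ⟨hgd, hg⟩, he⟩
      · have he2 : k' = k := by omega
        rw [he2] at hk'
        exact ((InT_iff w k).mp hk) hk'
      · omega
      · omega
    · rcases hmem with (⟨k', hk', he⟩ | ⟨i, hi, he⟩) | ⟨g, ⟨hgd, hg⟩, he⟩
      · omega
      · omega
      · have he2 : g = k := by omega
        rw [he2] at hg
        exact ((InT_iff w k).mp hk) hg
    · -- n = B + 2k
      have hB : (2*w+5)*((2*w+5)+3)+1 = 4*(2*w+5)+5 + 2*(2*w*w+9*w+8) := by ring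
      rcases hmem with (⟨k', hk', he⟩ | ⟨i, hi, he⟩) | ⟨g, ⟨hgd, hg⟩, he⟩
      · omega
      · omega
      · -- 4l+5+2g = B+2k = 4l+5+2d+2k, so g = d + k, g ∈ GTf, g ≠ d
        have hglt : g < 2*w*w+9*w+10 := GTf_lt hg
        have hgk : g = 2*w*w+9*w+8 + k := by omega
        have hk1 : k = 1 := by omega
        subst hk1
        exact ((InT_iff w 1).mp hk) (one_mem_GTf w)

lemma GTf_card (w : ℕ) : (GTf (2*w+5) (w+2)).card = (w+2)*(w+3) := by
  rw [GTf, Finset.card_biUnion]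
  · have hcongr : ∀ m ∈ Finset.range (w+2),
        (Finset.Ico ((2*w+5)*m + 2*m + 1) ((2*w+5)*(m+1))).card = 2*(w+2) - 2*m := by
      intro m hm
      rw [Nat.card_Ico]
      have h1 : (2*w+5)*(m+1) = (2*w+5)*m + 2*w+5 := by ring
      have hm2 : m < w+2 := Finset.mem_range.mp hm
      omega
    rw [Finset.sum_congr rfl hcongr]
    rw [← Finset.sum_range_reflect]
    have hcongr2 : ∀ m ∈ Finset.range (w+2),
        2*(w+2) - 2*(w+2-1-m) = 2*m+2 := by
      intro m hm
      have := Finset.mem_range.mp hm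
      omega
    rw [Finset.sum_congr rfl hcongr2, Finset.sum_add_distrib, Finset.sum_const,
      Finset.card_range, smul_eq_mul]
    have h2 : ∑ m ∈ Finset.range (w+2), 2*m = 2 * ∑ m ∈ Finset.range (w+2), m := by
      rw [Finset.mul_sum]
    have h3 : (∑ i ∈ Finset.range (w+2), i) * 2 = (w+2)*(w+1) := by
      rw [Finset.sum_range_id_mul_two]; norm_num
    zify at h2 h3 ⊢
    linear_combination h2 + h3
  · intro m hm m' hm' hne
    have key : ∀ a b : ℕ, a < b →
        Disjoint (Finset.Ico ((2*w+5)*a + 2*a + 1) ((2*w+5)*(a+1)))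
          (Finset.Ico ((2*w+5)*b + 2*b + 1) ((2*w+5)*(b+1))) := by
      intro a b hab
      apply Finset.disjoint_left.mpr
      intro x hx hx'
      simp only [Finset.mem_Ico] at hx hx'
      have : (2*w+5)*(a+1) ≤ (2*w+5)*b := Nat.mul_le_mul_left _ (by omega)
      omega
    rcases lt_or_gt_of_ne hne with h | h
    · exact key m m' h
    · exact (key m' m h).symm

lemma Gfin_card (w : ℕ) : (Gfin w).card = 2*((w+2)*(w+3)) + 2*(2*w+5) + 1 := by
  rw [Gfin]
  rw [Finset.card_union_of_disjoint, Finset.card_union_of_disjoint]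
  · rw [Finset.card_image_of_injective _ (fun a b h => by omega),
      Finset.card_image_of_injective _ (fun a b h => by omega),
      Finset.card_image_of_injective _ (fun a b h => by omega),
      Finset.card_range, Finset.card_erase_of_mem (d_mem_GTf w), GTf_card]
    have : 1 ≤ (w+2)*(w+3) := by nlinarith
    omega
  · -- disjoint (evens) (odds < a)
    apply Finset.disjoint_left.mpr
    intro x hx hx'
    simp only [Finset.mem_image] at hx hx'
    obtain ⟨k, _, rfl⟩ := hx
    obtain ⟨i, _, he⟩ := hx'
    omega
  · -- disjoint (evens ∪ small odds) (a + 2g)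
    apply Finset.disjoint_left.mpr
    intro x hx hx'
    simp only [Finset.mem_union, Finset.mem_image, Finset.mem_range] at hx hx'
    obtain ⟨g, _, rfl⟩ := hx'
    rcases hx with ⟨k, _, he⟩ | ⟨i, hi, he⟩ <;> omega

end GenusAux

theorem genus_Sstar_odd
    (l : ℕ) (hl : 5 ≤ l) (hlo : Odd l) :
    {n : ℕ | ¬ ∃ x₁ x₂ x₃ x₄ x₅ : ℕ,
        n = x₁ * (2 * l) + x₂ * (2 * l + 2) + x₃ * (2 * l + 4)
          + x₄ * (4 * l + 5) + x₅ * (l * (l + 3) + 1)}.ncard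
      = (l ^ 2 + 1) / 2 + 2 * l := by
  obtain ⟨t, ht⟩ := hlo
  obtain ⟨w, rfl⟩ : ∃ w, l = 2*w+5 := ⟨t - 2, by omega⟩
  have hset : {n : ℕ | ¬ ∃ x₁ x₂ x₃ x₄ x₅ : ℕ,
      n = x₁ * (2 * (2*w+5)) + x₂ * (2 * (2*w+5) + 2) + x₃ * (2 * (2*w+5) + 4)
        + x₄ * (4 * (2*w+5) + 5) + x₅ * ((2*w+5) * ((2*w+5) + 3) + 1)}
      = {n : ℕ | ¬ GenusAux.InS (2*w+5) n} := rfl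
  rw [hset, GenusAux.gap_eq, Set.ncard_coe_finset, GenusAux.Gfin_card]
  have h1 : ((2*w+5) ^ 2 + 1) = 2 * (2*w*w + 10*w + 13) := by ring
  rw [h1, Nat.mul_div_cancel_left _ (by norm_num : 0 < 2)]
  ring
end

section
/- Let a, b, c be pairwise relatively prime integers with 2 ≤ a < b < c and let S = ⟨ab, ac, bc⟩. Then #{x ∈ S : 0 < x < abc} equals the number of nonzero triples (u,v,w) ∈ ℕ³ with u·ab + v·ac + w·bc < abc. -/
theorem count_below_abc
    (a b c : ℕ) (ha : 2 ≤ a) (hab : a < b) (hbc : b < c)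
    (cab : Nat.Coprime a b) (cac : Nat.Coprime a c) (cbc : Nat.Coprime b c) :
    {n : ℕ | (∃ u v w : ℕ, n = u * (a * b) + v * (a * c) + w * (b * c)) ∧
        0 < n ∧ n < a * b * c}.ncard
      = {t : ℕ × ℕ × ℕ | t ≠ (0, 0, 0) ∧
          t.1 * (a * b) + t.2.1 * (a * c) + t.2.2 * (b * c) < a * b * c}.ncard := by
  classical
  have ha0 : 0 < a := by omega
  have hb0 : 0 < b := by omega
  have hc0 : 0 < c := by omega
  set f : ℕ × ℕ × ℕ → ℕ := fun t => t.1 * (a * b) + t.2.1 * (a * c) + t.2.2 * (b * c)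
    with hf
  have himg : {n : ℕ | (∃ u v w : ℕ, n = u * (a * b) + v * (a * c) + w * (b * c)) ∧
        0 < n ∧ n < a * b * c}
      = f '' {t : ℕ × ℕ × ℕ | t ≠ (0, 0, 0) ∧
          t.1 * (a * b) + t.2.1 * (a * c) + t.2.2 * (b * c) < a * b * c} := by
    ext n
    constructor
    · rintro ⟨⟨u, v, w, rfl⟩, hpos, hlt⟩
      refine ⟨(u, v, w), ⟨?_, hlt⟩, rfl⟩
      rintro h
      rw [Prod.ext_iff, Prod.ext_iff] at h
      obtain ⟨h1, h2, h3⟩ := h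
      simp only at h1 h2 h3
      subst h1 h2 h3
      simp at hpos
    · rintro ⟨⟨u, v, w⟩, ⟨hne, hlt⟩, rfl⟩
      refine ⟨⟨u, v, w, rfl⟩, ?_, hlt⟩
      simp only [hf]
      by_contra hz
      push_neg at hz
      have : u * (a * b) = 0 ∧ v * (a * c) = 0 ∧ w * (b * c) = 0 := by omega
      obtain ⟨e1, e2, e3⟩ := this
      have hu : u = 0 := by
        have hp : 0 < a * b := by positivity
        rcases Nat.mul_eq_zero.1 e1 with h | h
        · exact h
        · omega
      have hv : v = 0 := by
        have hp : 0 < a * c := by positivity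
        rcases Nat.mul_eq_zero.1 e2 with h | h
        · exact h
        · omega
      have hw : w = 0 := by
        have hp : 0 < b * c := by positivity
        rcases Nat.mul_eq_zero.1 e3 with h | h
        · exact h
        · omega
      exact hne (by simp [hu, hv, hw])
  rw [himg]
  refine Set.ncard_image_of_injOn ?_
  rintro ⟨u1, v1, w1⟩ ⟨-, hlt1⟩ ⟨u2, v2, w2⟩ ⟨-, hlt2⟩ heq
  simp only [hf] at heq
  simp only [Set.mem_setOf_eq] at hlt1 hlt2
  -- bounds
  have hu1 : u1 < c := by
    have h1 : u1 * (a * b) < c * (a * b) := by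
      calc u1 * (a * b) ≤ u1 * (a * b) + v1 * (a * c) + w1 * (b * c) := by omega
        _ < a * b * c := hlt1
        _ = c * (a * b) := by ring
    exact Nat.lt_of_mul_lt_mul_right h1
  have hu2 : u2 < c := by
    have h1 : u2 * (a * b) < c * (a * b) := by
      calc u2 * (a * b) ≤ u2 * (a * b) + v2 * (a * c) + w2 * (b * c) := by omega
        _ < a * b * c := hlt2
        _ = c * (a * b) := by ring
    exact Nat.lt_of_mul_lt_mul_right h1
  have hv1 : v1 < b := by
    have h1 : v1 * (a * c) < b * (a * c) := by
      calc v1 * (a * c) ≤ u1 * (a * b) + v1 * (a * c) + w1 * (b * c) := by omega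
        _ < a * b * c := hlt1
        _ = b * (a * c) := by ring
    exact Nat.lt_of_mul_lt_mul_right h1
  have hv2 : v2 < b := by
    have h1 : v2 * (a * c) < b * (a * c) := by
      calc v2 * (a * c) ≤ u2 * (a * b) + v2 * (a * c) + w2 * (b * c) := by omega
        _ < a * b * c := hlt2
        _ = b * (a * c) := by ring
    exact Nat.lt_of_mul_lt_mul_right h1
  have hw1 : w1 < a := by
    have h1 : w1 * (b * c) < a * (b * c) := by
      calc w1 * (b * c) ≤ u1 * (a * b) + v1 * (a * c) + w1 * (b * c) := by omega
        _ < a * b * c := hlt1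
        _ = a * (b * c) := by ring
    exact Nat.lt_of_mul_lt_mul_right h1
  have hw2 : w2 < a := by
    have h1 : w2 * (b * c) < a * (b * c) := by
      calc w2 * (b * c) ≤ u2 * (a * b) + v2 * (a * c) + w2 * (b * c) := by omega
        _ < a * b * c := hlt2
        _ = a * (b * c) := by ring
    exact Nat.lt_of_mul_lt_mul_right h1
  -- mod c : u1 = u2
  have hmodc : u1 * (a * b) % c = u2 * (a * b) % c := by
    have h1 : (u1 * (a * b) + (v1 * a + w1 * b) * c) % c
        = (u2 * (a * b) + (v2 * a + w2 * b) * c) % c := by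
      rw [show u1 * (a * b) + (v1 * a + w1 * b) * c
          = u1 * (a * b) + v1 * (a * c) + w1 * (b * c) from by ring,
        show u2 * (a * b) + (v2 * a + w2 * b) * c
          = u2 * (a * b) + v2 * (a * c) + w2 * (b * c) from by ring, heq]
    simpa [Nat.add_mul_mod_self_right] using h1
  have hu : u1 = u2 := by
    have hcop : Nat.gcd c (a * b) = 1 := Nat.Coprime.mul_right cac.symm cbc.symm
    exact (Nat.ModEq.cancel_right_of_coprime hcop hmodc).eq_of_lt_of_lt hu1 hu2
  -- mod b : v1 = v2
  have hmodb : v1 * (a * c) % b = v2 * (a * c) % b := by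
    have h1 : (v1 * (a * c) + (u1 * a + w1 * c) * b) % b
        = (v2 * (a * c) + (u2 * a + w2 * c) * b) % b := by
      rw [show v1 * (a * c) + (u1 * a + w1 * c) * b
          = u1 * (a * b) + v1 * (a * c) + w1 * (b * c) from by ring,
        show v2 * (a * c) + (u2 * a + w2 * c) * b
          = u2 * (a * b) + v2 * (a * c) + w2 * (b * c) from by ring, heq]
    simpa [Nat.add_mul_mod_self_right] using h1
  have hv : v1 = v2 := by
    have hcop : Nat.gcd b (a * c) = 1 := Nat.Coprime.mul_right cab.symm cbc
    exact (Nat.ModEq.cancel_right_of_coprime hcop hmodb).eq_of_lt_of_lt hv1 hv2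
  -- w1 = w2
  have hw : w1 = w2 := by
    subst hu hv
    have h3 : w1 * (b * c) = w2 * (b * c) := by omega
    exact Nat.eq_of_mul_eq_mul_right (by positivity) h3
  simp [Prod.ext_iff, hu, hv, hw]
end

section
/- Let m ≥ 2 and ℓ ≥ 2m be integers with ℓ even, and let S* = ⟨mℓ, mℓ+m, mℓ+2m, 2m(ℓ+1)+1, m(ℓ/2+1)ℓ+1⟩. Then the genus of S* equals (1/4)mℓ² + m(m−1)ℓ + (m−1)(m−2). -/
/-!
Write `l = 2h`, `T = ⟨l, l+1, l+2⟩ = {l q + r | r ≤ 2q}` and `Δ = lh - l - 2`. Reducing modulo `m`,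
the residue `c < m` of an element of `S*` is supplied by `e` copies of the fourth and `i` copies of
the fifth generator with `e + i = c`, so `m t + c ∈ S*` iff `t ∈ 2(l+1)c + iΔ + T` for some
`i ≤ c`. Since `lh` is the conductor of `T` and `2Δ ≥ lh` once `h ≥ 3`, only `i ≤ 1` matters, and
`T ∪ (Δ + T)` misses exactly the gaps of `T` other than `Δ` and `Δ + l + 1`. Hence the class `0`
has the `h²` gaps of `T` and each class `c > 0` has `2(l+1)c + h² - 2` gaps; summing over `c < m`
gives the genus.
-/

open Finset

lemma mul_add_div_and_mod {m q r : ℕ} (hr : r < m) : (m * q + r) / m = q ∧ (m * q + r) % m = r :=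
  (Nat.div_mod_unique (by omega)).2 ⟨add_comm r (m * q), hr⟩

lemma exists_lt_mul_add_mem_iff {m n : ℕ} (hm : 0 < m) {A : ℕ → Set ℕ} :
    (∃ c < m, ∃ t ∈ A c, n = m * t + c) ↔ n / m ∈ A (n % m) := by
  constructor
  · rintro ⟨c, hc, t, ht, rfl⟩
    rwa [(mul_add_div_and_mod hc).1, (mul_add_div_and_mod hc).2]
  · exact fun h => ⟨n % m, Nat.mod_lt n hm, n / m, h, (Nat.div_add_mod n m).symm⟩

def ofResidues (m : ℕ) (G : ℕ → Finset ℕ) : Finset ℕ :=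
  (range m).biUnion fun c => (G c).image (m * · + c)

section ofResidues

variable {m : ℕ} {G : ℕ → Finset ℕ}

lemma mem_ofResidues (hm : 0 < m) {n : ℕ} : n ∈ ofResidues m G ↔ n / m ∈ G (n % m) := by
  rw [← mem_coe (s := G _), ← exists_lt_mul_add_mem_iff hm (A := fun c => ↑(G c))]
  simp only [ofResidues, mem_biUnion, mem_range, mem_image, mem_coe, eq_comm (a := n)]

lemma card_ofResidues (hm : 0 < m) : #(ofResidues m G) = ∑ c ∈ range m, #(G c) := by
  rw [ofResidues, card_biUnion]
  · refine sum_congr rfl fun c _ => card_image_of_injective _ fun a b hab => ?_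
    exact Nat.eq_of_mul_eq_mul_left hm (Nat.add_right_cancel hab)
  · intro c hc c' hc' hne
    refine disjoint_left.2 fun x hx hx' => hne ?_
    obtain ⟨t, -, rfl⟩ := mem_image.1 hx
    obtain ⟨t', -, ht'⟩ := mem_image.1 hx'
    rw [← (mul_add_div_and_mod (mem_range.1 hc)).2, ← ht', (mul_add_div_and_mod (mem_range.1 hc')).2]

end ofResidues

/-- The semigroup `⟨l, l + 1, l + 2⟩`: a sum of `q` generators is `l * q + r` with `r ≤ 2 * q`. -/
def consecSemigroup (l : ℕ) : Set ℕ := {t | ∃ q r, r ≤ 2 * q ∧ t = l * q + r}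

/-- The gaps of `consecSemigroup l` for `l = 2 * h`. -/
def tGaps (l h : ℕ) : Finset ℕ :=
  (range h).biUnion fun q => (Ioo (2 * q) l).image (l * q + ·)

section consecSemigroup

variable {l h t : ℕ}

lemma mem_consecSemigroup_iff (hl : 0 < l) : t ∈ consecSemigroup l ↔ t % l ≤ 2 * (t / l) := by
  constructor
  · rintro ⟨q, r, hr, rfl⟩
    rw [Nat.mul_add_div hl, Nat.mul_add_mod]
    exact (Nat.mod_le r l).trans (hr.trans (Nat.mul_le_mul_left 2 (Nat.le_add_right q _)))
  · exact fun ht => ⟨t / l, t % l, ht, (Nat.div_add_mod t l).symm⟩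

lemma eq_zero_or_eq_or_eq_add_one_of_mem_consecSemigroup (hl : 0 < l)
    (ht : t ∈ consecSemigroup l) (htl : t < l + 2) : t = 0 ∨ t = l ∨ t = l + 1 := by
  rw [mem_consecSemigroup_iff hl] at ht
  rcases lt_or_ge t l with htl' | htl'
  · rw [Nat.div_eq_of_lt htl', Nat.mod_eq_of_lt htl'] at ht
    omega
  · omega

lemma lt_of_mem_tGaps (ht : t ∈ tGaps l h) : t < l * h := by
  simp only [tGaps, mem_biUnion, mem_range, mem_image, mem_Ioo] at ht
  obtain ⟨q, hq, r, ⟨-, hr⟩, rfl⟩ := ht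
  calc l * q + r < l * (q + 1) := by rw [mul_add_one]; omega
    _ ≤ l * h := Nat.mul_le_mul_left l hq

lemma mem_tGaps_iff (hl : l = 2 * h) (hh : 0 < h) : t ∈ tGaps l h ↔ 2 * (t / l) < t % l := by
  simp only [tGaps, mem_biUnion, mem_range, mem_image, mem_Ioo]
  constructor
  · rintro ⟨q, -, r, ⟨hqr, hr⟩, rfl⟩
    rwa [(mul_add_div_and_mod hr).1, (mul_add_div_and_mod hr).2]
  · intro ht
    have := Nat.mod_lt t (show 0 < l by omega)
    exact ⟨t / l, by omega, t % l, ⟨ht, this⟩, Nat.div_add_mod t l⟩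

lemma notMem_tGaps_iff (hl : l = 2 * h) (hh : 0 < h) : t ∉ tGaps l h ↔ t ∈ consecSemigroup l := by
  rw [mem_tGaps_iff hl hh, mem_consecSemigroup_iff (by omega), not_lt]

lemma mem_consecSemigroup_of_le (hl : l = 2 * h) (hh : 0 < h) (ht : l * h ≤ t) :
    t ∈ consecSemigroup l :=
  (notMem_tGaps_iff hl hh).1 fun hgap => (lt_of_mem_tGaps hgap).not_ge ht

lemma mul_add_mem_tGaps_iff (hl : l = 2 * h) (hh : 0 < h) {q r : ℕ} (hr : r < l) :
    l * q + r ∈ tGaps l h ↔ 2 * q < r := by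
  rw [mem_tGaps_iff hl hh, (mul_add_div_and_mod hr).1, (mul_add_div_and_mod hr).2]

lemma card_tGaps (hl : l = 2 * h) : #(tGaps l h) = h * h := by
  have hodd : ∀ n, ∑ q ∈ range n, (2 * q + 1) = n * n := by
    intro n
    induction n with
    | zero => rfl
    | succ n ih => rw [sum_range_succ, ih]; ring
  rw [tGaps, card_biUnion]
  · calc ∑ q ∈ range h, #((Ioo (2 * q) l).image (l * q + ·))
        = ∑ q ∈ range h, (2 * (h - 1 - q) + 1) := by
          refine sum_congr rfl fun q hq => ?_
          rw [card_image_of_injective _ (add_right_injective _), Nat.card_Ioo]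
          have := mem_range.1 hq
          omega
      _ = h * h := by rw [sum_range_reflect (fun q => 2 * q + 1) h, hodd]
  · intro q _ q' _ hne
    refine disjoint_left.2 fun x hx hx' => hne ?_
    simp only [mem_image, mem_Ioo] at hx hx'
    obtain ⟨r, ⟨-, hr⟩, rfl⟩ := hx
    obtain ⟨r', ⟨-, hr'⟩, hx'⟩ := hx'
    rw [← (mul_add_div_and_mod (q := q) hr).1, ← hx', (mul_add_div_and_mod hr').1]

end consecSemigroup

section nearConductor

variable {l h : ℕ}

lemma add_two_le_mul (hl : l = 2 * h) (hh : 2 ≤ h) : l + 2 ≤ l * h := by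
  have := Nat.mul_le_mul_left l hh
  omega

lemma mul_sub_sub_two_mem_tGaps (hl : l = 2 * h) (hh : 2 ≤ h) : l * h - l - 2 ∈ tGaps l h := by
  obtain ⟨k, rfl⟩ := Nat.exists_eq_add_of_le hh
  rw [show l * (2 + k) - l - 2 = l * k + (l - 2) by rw [mul_add]; omega,
    mul_add_mem_tGaps_iff hl (by omega) (by omega)]
  omega

lemma mul_sub_two_notMem_tGaps (hl : l = 2 * h) (hh : 2 ≤ h) : l * h - 2 ∉ tGaps l h := by
  obtain ⟨k, rfl⟩ := Nat.exists_eq_add_of_le (show 1 ≤ h by omega)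
  rw [show l * (1 + k) - 2 = l * k + (l - 2) by rw [mul_add]; omega,
    mul_add_mem_tGaps_iff hl (by omega) (by omega)]
  omega

lemma mul_sub_one_mem_tGaps (hl : l = 2 * h) (hh : 0 < h) : l * h - 1 ∈ tGaps l h := by
  obtain ⟨k, rfl⟩ := Nat.exists_eq_add_of_le hh
  rw [show l * (1 + k) - 1 = l * k + (l - 1) by rw [mul_add]; omega,
    mul_add_mem_tGaps_iff hl (by omega) (by omega)]
  omega

lemma notMem_tGaps_sdiff_iff (hl : l = 2 * h) (hh : 2 ≤ h) {u : ℕ} :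
    u ∉ tGaps l h \ {l * h - l - 2, l * h - 1} ↔
      u ∈ consecSemigroup l ∨ ∃ s ∈ consecSemigroup l, u = l * h - l - 2 + s := by
  have hlh := add_two_le_mul hl hh
  simp only [mem_sdiff, mem_insert, mem_singleton, not_and, not_not]
  constructor
  · intro hu
    by_cases hgap : u ∈ tGaps l h
    · right
      rcases hu hgap with rfl | rfl
      · exact ⟨0, ⟨0, 0, le_rfl, rfl⟩, rfl⟩
      · exact ⟨l + 1, ⟨1, 1, by norm_num, by ring⟩, by omega⟩
    · exact .inl ((notMem_tGaps_iff hl (by omega)).1 hgap)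
  · rintro (hu | ⟨s, hs, rfl⟩) hgap
    · exact absurd hgap ((notMem_tGaps_iff hl (by omega)).2 hu)
    · have := lt_of_mem_tGaps hgap
      rcases eq_zero_or_eq_or_eq_add_one_of_mem_consecSemigroup (by omega) hs (by omega)
        with rfl | rfl | rfl
      · exact .inl rfl
      · exact (mul_sub_two_notMem_tGaps hl hh (by convert hgap using 1; omega)).elim
      · exact .inr (by omega)

end nearConductor

def sStar (m l a : ℕ) : Set ℕ :=
  {n | ∃ x₁ x₂ x₃ x₄ x₅ : ℕ,
    n = x₁ * (m * l) + x₂ * (m * l + m) + x₃ * (m * l + 2 * m)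
      + x₄ * (2 * m * (l + 1) + 1) + x₅ * (m * a * l + 1)}

/-- `e` and `i` count the fourth and fifth generators of `sStar m l a`, which carry the residue
`c` modulo `m`. -/
def fiber (l a c : ℕ) : Set ℕ :=
  {t | ∃ e i, e + i = c ∧ ∃ s ∈ consecSemigroup l, t = s + 2 * (l + 1) * e + a * l * i}

lemma mem_sStar_iff {m l a n : ℕ} (hm : 0 < m) (ha : 0 < a) :
    n ∈ sStar m l a ↔ n / m ∈ fiber l a (n % m) := by
  rw [← exists_lt_mul_add_mem_iff hm]
  constructor
  · rintro ⟨x₁, x₂, x₃, x₄, x₅, rfl⟩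
    have hdiv := Nat.div_add_mod (x₄ + x₅) m
    set k := (x₄ + x₅) / m
    set c := (x₄ + x₅) % m
    have hcle : c ≤ x₄ + x₅ := Nat.mod_le _ _
    obtain ⟨e, i, d₄, d₅, hei, rfl, rfl⟩ : ∃ e i d₄ d₅, e + i = c ∧ x₄ = e + d₄ ∧ x₅ = i + d₅ :=
      ⟨c - min x₅ c, min x₅ c, x₄ - (c - min x₅ c), x₅ - min x₅ c, by omega, by omega, by omega⟩
    have hd : d₄ + d₅ = m * k := by omega
    have hk : k ≤ d₄ + d₅ := hd ▸ Nat.le_mul_of_pos_left k hm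
    have hd₅ : d₅ ≤ a * d₅ := Nat.le_mul_of_pos_left d₅ ha
    refine ⟨c, Nat.mod_lt _ hm, _, ⟨e, i, hei, _,
      ⟨x₁ + x₂ + x₃ + 2 * d₄ + a * d₅, x₂ + 2 * x₃ + 2 * d₄ + k, by omega, rfl⟩, rfl⟩, ?_⟩
    rw [← hei]
    linear_combination hd
  · rintro ⟨c, -, t, ⟨e, i, rfl, s, ⟨q, r, hr, rfl⟩, rfl⟩, rfl⟩
    refine ⟨q - r / 2 - r % 2, r % 2, r / 2, e, i, ?_⟩
    obtain ⟨x₃, x₂, hx₂, rfl⟩ : ∃ x₃ x₂, x₂ < 2 ∧ r = 2 * x₃ + x₂ := ⟨r / 2, r % 2, by omega, by omega⟩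
    obtain ⟨x₁, rfl⟩ : ∃ x₁, q = x₁ + x₂ + x₃ := ⟨q - x₂ - x₃, by omega⟩
    rw [show (2 * x₃ + x₂) / 2 = x₃ by omega, show (2 * x₃ + x₂) % 2 = x₂ by omega,
      show x₁ + x₂ + x₃ - x₃ - x₂ = x₁ by omega]
    ring

/-- The gaps of `fiber l (h + 1) c` for `l = 2 * h`. -/
def classGaps (l h : ℕ) : ℕ → Finset ℕ
  | 0 => tGaps l h
  | c + 1 => range (2 * (l + 1) * (c + 1)) ∪
      (tGaps l h \ {l * h - l - 2, l * h - 1}).image (· + 2 * (l + 1) * (c + 1))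

section classGaps

variable {l h t : ℕ}

lemma mem_fiber_zero_iff {a : ℕ} : t ∈ fiber l a 0 ↔ t ∈ consecSemigroup l := by
  constructor
  · rintro ⟨e, i, hei, s, hs, rfl⟩
    obtain ⟨rfl, rfl⟩ : e = 0 ∧ i = 0 := by omega
    simpa using hs
  · exact fun ht => ⟨0, 0, rfl, t, ht, by ring⟩

lemma mem_fiber_succ_iff (hl : l = 2 * h) {k : ℕ} (hk : k + 1 < h) :
    t ∈ fiber l (h + 1) (k + 1) ↔ ∃ u, t = 2 * (l + 1) * (k + 1) + u ∧
      (u ∈ consecSemigroup l ∨ ∃ s ∈ consecSemigroup l, u = l * h - l - 2 + s) := by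
  have hlh := add_two_le_mul hl (by omega)
  have hsplit : ∀ e i, 2 * (l + 1) * e + (h + 1) * l * i
      = 2 * (l + 1) * (e + i) + i * (l * h - l - 2) := by
    intro e i
    obtain ⟨D, hD⟩ : ∃ D, l * h = D + l + 2 := ⟨l * h - l - 2, by omega⟩
    rw [hD, show D + l + 2 - l - 2 = D by omega]
    linear_combination i * hD
  constructor
  · rintro ⟨e, i, hei, s, hs, rfl⟩
    refine ⟨i * (l * h - l - 2) + s, by rw [add_assoc, hsplit, hei]; ring, ?_⟩
    match i with
    | 0 => exact .inl (by simpa using hs)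
    | 1 => exact .inr ⟨s, hs, by ring⟩
    | i + 2 =>
      refine .inl (mem_consecSemigroup_of_le hl (by omega) ?_)
      have := Nat.mul_le_mul_right (l * h - l - 2) (show 2 ≤ i + 2 by omega)
      have := Nat.mul_le_mul_left l (show 3 ≤ h by omega)
      omega
  · rintro ⟨u, rfl, hu | ⟨s, hs, rfl⟩⟩
    · exact ⟨k + 1, 0, rfl, u, hu, by ring⟩
    · exact ⟨k, 1, rfl, s, hs, by rw [add_assoc s, hsplit]; ring⟩

lemma notMem_classGaps_succ_iff {k : ℕ} : t ∉ classGaps l h (k + 1) ↔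
    ∃ u, t = 2 * (l + 1) * (k + 1) + u ∧ u ∉ tGaps l h \ {l * h - l - 2, l * h - 1} := by
  simp only [classGaps, mem_union, mem_range, mem_image, not_or, not_lt, not_exists, not_and]
  constructor
  · rintro ⟨hle, himg⟩
    exact ⟨t - 2 * (l + 1) * (k + 1), by omega, fun hu => himg _ hu (by omega)⟩
  · rintro ⟨u, rfl, hu⟩
    exact ⟨by omega, fun v hv hvu => hu (by rwa [show v = u by omega] at hv)⟩

lemma mem_fiber_iff (hl : l = 2 * h) {c : ℕ} (hc : c < h) :
    t ∈ fiber l (h + 1) c ↔ t ∉ classGaps l h c := by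
  cases c with
  | zero => exact mem_fiber_zero_iff.trans (notMem_tGaps_iff hl hc).symm
  | succ k =>
    rw [mem_fiber_succ_iff hl hc, notMem_classGaps_succ_iff]
    simp only [notMem_tGaps_sdiff_iff hl (show 2 ≤ h by omega)]

lemma card_classGaps_succ (hl : l = 2 * h) (hh : 2 ≤ h) {k : ℕ} :
    #(classGaps l h (k + 1)) = 2 * (l + 1) * (k + 1) + (h * h - 2) := by
  have hlh := add_two_le_mul hl hh
  have hsub : {l * h - l - 2, l * h - 1} ⊆ tGaps l h :=
    insert_subset_iff.2 ⟨mul_sub_sub_two_mem_tGaps hl hh,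
      singleton_subset_iff.2 (mul_sub_one_mem_tGaps hl (by omega))⟩
  have hdisj : Disjoint (range (2 * (l + 1) * (k + 1)))
      ((tGaps l h \ {l * h - l - 2, l * h - 1}).image (· + 2 * (l + 1) * (k + 1))) := by
    refine disjoint_left.2 fun x hx hx' => ?_
    obtain ⟨v, -, rfl⟩ := mem_image.1 hx'
    simp at hx
  rw [classGaps, card_union_of_disjoint hdisj, card_range,
    card_image_of_injective _ (add_left_injective _), card_sdiff_of_subset hsub, card_tGaps hl,
    card_pair (by omega)]

lemma card_ofResidues_classGaps (hl : l = 2 * h) (hh : 2 ≤ h) {m : ℕ} (hm : 0 < m) :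
    #(ofResidues m (classGaps l h)) = m * l ^ 2 / 4 + m * (m - 1) * l + (m - 1) * (m - 2) := by
  obtain ⟨M, rfl⟩ : ∃ M, m = M + 1 := ⟨m - 1, by omega⟩
  have hgauss : (∑ k ∈ range M, (k + 1)) * 2 = (M + 1) * M := by
    have := sum_range_id_mul_two (M + 1)
    rwa [sum_range_succ', add_zero, Nat.add_sub_cancel] at this
  have hsq : (M + 1) * l ^ 2 / 4 = (M + 1) * (h * h) := by
    rw [hl, show (M + 1) * (2 * h) ^ 2 = 4 * ((M + 1) * (h * h)) by ring,
      Nat.mul_div_cancel_left _ (by norm_num)]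
  obtain ⟨H, hH⟩ : ∃ H, h * h = H + 2 := ⟨h * h - 2, by have := Nat.mul_le_mul hh hh; omega⟩
  rw [card_ofResidues hm, sum_range_succ', sum_congr rfl fun k _ => card_classGaps_succ hl hh,
    show #(classGaps l h 0) = h * h from card_tGaps hl, sum_add_distrib, ← mul_sum, sum_const,
    card_range, smul_eq_mul, hsq, hH, Nat.add_sub_cancel]
  rcases M with _ | M
  · simp
  · rw [show M + 1 + 1 - 1 = M + 1 by omega, show M + 1 + 1 - 2 = M by omega]
    linear_combination (l + 1) * hgauss

end classGaps

theorem genus_Sstar_general_even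
    (m l : ℕ) (hm : 2 ≤ m) (hl : 2 * m ≤ l) (hle : Even l) :
    {n : ℕ | ¬ ∃ x₁ x₂ x₃ x₄ x₅ : ℕ,
        n = x₁ * (m * l) + x₂ * (m * l + m) + x₃ * (m * l + 2 * m)
          + x₄ * (2 * m * (l + 1) + 1) + x₅ * (m * (l / 2 + 1) * l + 1)}.ncard
      = m * l ^ 2 / 4 + m * (m - 1) * l + (m - 1) * (m - 2) := by
  obtain ⟨h, hh⟩ := hle
  have hl₂ : l = 2 * h := by omega
  have hm₀ : 0 < m := by omega
  have hgaps : (sStar m l (h + 1))ᶜ = ↑(ofResidues m (classGaps l h)) := by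
    ext n
    have := Nat.mod_lt n hm₀
    rw [Set.mem_compl_iff, mem_sStar_iff hm₀ h.succ_pos, mem_fiber_iff hl₂ (by omega), not_not,
      mem_coe, mem_ofResidues hm₀]
  show (sStar m l (l / 2 + 1))ᶜ.ncard = _
  rw [show l / 2 = h by omega, hgaps, Set.ncard_coe_finset,
    card_ofResidues_classGaps hl₂ (by omega) hm₀]
end
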